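/- arXiv:2408.02122 — 5 statements merged into one kernel-verified Lean document; each statement's English description precedes it below -/
import Mathlib

section
/- The probability measure μ is invariant for the kernel P_c: for every measurable set S ⊆ {1,…,B} × ℝ^d, ∫ P_c(x, S) μ(dx) = μ(S). Consequently, the marginal of μ on the ℝ^d-component has Lebesgue density π̂(θ) = π̂_KDE(θ)L(θ) / ∫_{ℝ^d} π̂_KDE(τ)L(τ) dτ. -/
/-!
With counting measure × Lebesgue measure as reference measure on `{1,…,B} × ℝ^d`, `μ` has density
`π(j, θ) ∝ K((θ - θ_j)/h) L(θ)`, and `P_c` is a Metropolis–Hastings kernel whose accepted moves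
`(i, θ) → (j, θ')` have density `q(i,j) h^{-d} K((θ' - θ_j)/h) min{q(j,i)L(θ')/(q(i,j)L(θ)), 1}`.
Detailed balance holds pointwise: `π` times this density is, up to normalisation,
`h^{-d} K_i(θ) K_j(θ') min{q(j,i)L(θ'), q(i,j)L(θ)}`, which is symmetric. By Fubini the mass moving
into `S` then equals the mass moving out of `S`, and the rejection term makes up the difference.
Summing `π(j, θ)` over `j` gives the marginal density `π̂_KDE L / ∫ π̂_KDE L`.
-/

open MeasureTheory Finset Function
open scoped ENNReal

namespace MeasureTheory

theorem toReal_withDensity_ofReal_apply {α : Type*} [MeasurableSpace α] {ν : Measure α}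
    {π : α → ℝ} (hπ : Integrable π ν) (hπ0 : ∀ x, 0 ≤ π x) {S : Set α} (hS : MeasurableSet S) :
    ((ν.withDensity fun x => ENNReal.ofReal (π x)) S).toReal = ∫ x in S, π x ∂ν := by
  rw [withDensity_apply _ hS, ← ofReal_integral_eq_lintegral_ofReal hπ.integrableOn
    (ae_of_all _ hπ0), ENNReal.toReal_ofReal (setIntegral_nonneg hS fun x _ => hπ0 x)]

section CountProd

variable {ι α E : Type*} [MeasurableSpace ι] [MeasurableSpace α] [NormedAddCommGroup E]

theorem Measure.ext_of_singleton_prod [MeasurableSingletonClass ι] [Countable ι]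
    {μ μ' : Measure (ι × α)}
    (h : ∀ j A, MeasurableSet A → μ ({j} ×ˢ A) = μ' ({j} ×ˢ A)) : μ = μ' := by
  ext S hS
  have hfib : S = ⋃ j, {j} ×ˢ (Prod.mk j ⁻¹' S) := by
    ext ⟨i, x⟩; simp
  have hdisj : Pairwise (Disjoint on fun j : ι => {j} ×ˢ (Prod.mk j ⁻¹' S)) :=
    fun i j hij => Set.disjoint_prod.mpr (Or.inl (Set.disjoint_singleton.mpr hij))
  have hmeas : ∀ j : ι, MeasurableSet ({j} ×ˢ (Prod.mk j ⁻¹' S)) :=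
    fun j => (measurableSet_singleton j).prod (measurable_prodMk_left hS)
  rw [hfib, measure_iUnion hdisj hmeas, measure_iUnion hdisj hmeas]
  exact tsum_congr fun j => h j _ (measurable_prodMk_left hS)

variable {ν : Measure α} [SFinite ν]

theorem Measure.count_prod_eq_sum_map :
    (Measure.count : Measure ι).prod ν = Measure.sum fun i => ν.map (Prod.mk i) := by
  simp only [Measure.count, Measure.prod_sum_left, Measure.dirac_prod]

variable [MeasurableSingletonClass ι] [Fintype ι]

theorem integrable_count_prod_iff {f : ι × α → E} :
    Integrable f (Measure.count.prod ν) ↔ ∀ i, Integrable (fun x => f (i, x)) ν := by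
  simp only [Measure.count_prod_eq_sum_map, Measure.sum_fintype, integrable_finsetSum_measure,
    mem_univ, true_implies, (measurableEmbedding_prodMk_left _).integrable_map_iff, comp_def]

theorem integral_count_prod [NormedSpace ℝ E] {f : ι × α → E}
    (hf : Integrable f (Measure.count.prod ν)) :
    ∫ z, f z ∂(Measure.count.prod ν) = ∑ i, ∫ x, f (i, x) ∂ν := by
  rw [Measure.count_prod_eq_sum_map] at hf ⊢
  simp only [integral_sum_measure hf, tsum_fintype,
    (measurableEmbedding_prodMk_left _).integral_map]

theorem setIntegral_count_prod [NormedSpace ℝ E] {f : ι × α → E}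
    (hf : Integrable f (Measure.count.prod ν)) {S : Set (ι × α)} (hS : MeasurableSet S) :
    ∫ z in S, f z ∂(Measure.count.prod ν) = ∑ i, ∫ x in Prod.mk i ⁻¹' S, f (i, x) ∂ν := by
  rw [← integral_indicator hS, integral_count_prod (hf.indicator hS)]
  congr 1 with i
  rw [← integral_indicator (measurable_prodMk_left hS)]
  rfl

theorem setIntegral_count_prod_singleton_prod [NormedSpace ℝ E] {f : ι × α → E}
    (hf : Integrable f (Measure.count.prod ν)) (j : ι) {A : Set α} (hA : MeasurableSet A) :
    ∫ z in {j} ×ˢ A, f z ∂(Measure.count.prod ν) = ∫ x in A, f (j, x) ∂ν := by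
  rw [setIntegral_count_prod hf ((measurableSet_singleton j).prod hA), Finset.sum_eq_single j]
  · simp
  · intro i _ hij
    simp [Set.mk_preimage_prod_right_eq_empty (Set.mem_singleton_iff.not.mpr hij)]
  · simp

theorem eq_withDensity_of_toReal_singleton_prod {μ : Measure (ι × α)} [IsFiniteMeasure μ]
    {π : ι × α → ℝ} (hπ : Integrable π (Measure.count.prod ν)) (hπ0 : ∀ z, 0 ≤ π z)
    (h : ∀ j A, MeasurableSet A → (μ ({j} ×ˢ A)).toReal = ∫ x in A, π (j, x) ∂ν) :
    μ = (Measure.count.prod ν).withDensity fun z => ENNReal.ofReal (π z) := by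
  refine Measure.ext_of_singleton_prod fun j A hA => ?_
  rw [← ENNReal.ofReal_toReal (measure_ne_top μ _), h j A hA,
    withDensity_apply _ ((measurableSet_singleton j).prod hA),
    ← ofReal_integral_eq_lintegral_ofReal hπ.integrableOn (ae_of_all _ hπ0),
    setIntegral_count_prod_singleton_prod hπ j hA]

theorem toReal_map_snd_withDensity_count_prod {π : ι × α → ℝ}
    (hπ : Integrable π (Measure.count.prod ν)) (hπ0 : ∀ z, 0 ≤ π z) {A : Set α}
    (hA : MeasurableSet A) :
    (((Measure.count.prod ν).withDensity fun z => ENNReal.ofReal (π z)).map Prod.snd A).toReal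
      = ∫ x in A, ∑ i, π (i, x) ∂ν := by
  rw [Measure.map_apply measurable_snd hA, toReal_withDensity_ofReal_apply hπ hπ0
    (measurable_snd hA), setIntegral_count_prod hπ (measurable_snd hA),
    integral_finsetSum _ fun i _ => (integrable_count_prod_iff.1 hπ i).integrableOn]
  rfl

end CountProd

end MeasureTheory

section MetropolisHastings

variable {α : Type*} [MeasurableSpace α]

/-- `a x y` is the density, with respect to `ν`, of accepted moves from `x` to `y`; the indicator
term is the rejected mass, which stays at `x`. -/
noncomputable def mhKernel (ν : Measure α) (a : α → α → ℝ) (x : α) (S : Set α) : ℝ :=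
  ∫ y in S, a x y ∂ν + S.indicator (fun x => 1 - ∫ y, a x y ∂ν) x

theorem integral_mul_mhKernel_of_detailedBalance {ν : Measure α} [SFinite ν] {π : α → ℝ}
    {a : α → α → ℝ} (hπ : Integrable π ν)
    (hF : Integrable (uncurry fun x y => π x * a x y) (ν.prod ν))
    (hdb : ∀ x y, π x * a x y = π y * a y x) {S : Set α} (hS : MeasurableSet S) :
    ∫ x, π x * mhKernel ν a x S ∂ν = ∫ x in S, π x ∂ν := by
  set F := fun x y => π x * a x y
  have hFS : Integrable (uncurry fun x y => S.indicator (F x) y) (ν.prod ν) :=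
    (hF.indicator (measurable_snd hS)).congr (ae_of_all _ fun z => by
      by_cases hz : z.2 ∈ S <;> simp [hz, Set.indicator, uncurry])
  -- Fubini and detailed balance: the mass moving into `S` equals the mass moving out of `S`.
  have hflow : ∫ x, ∫ y, S.indicator (F x) y ∂ν ∂ν = ∫ x in S, ∫ y, F x y ∂ν ∂ν := by
    rw [integral_integral_swap hFS, ← integral_indicator hS]
    congr 1 with y
    by_cases hy : y ∈ S <;> simp [hy, F, hdb _ y]
  have hpoint : ∀ x, π x * mhKernel ν a x S
      = ∫ y, S.indicator (F x) y ∂ν + S.indicator (fun x => π x - ∫ y, F x y ∂ν) x := by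
    intro x
    rw [mhKernel, mul_add, ← integral_const_mul, ← integral_indicator hS]
    by_cases hx : x ∈ S <;> simp [hx, F, mul_sub, integral_const_mul]
  have hFx : Integrable (fun x => ∫ y, F x y ∂ν) ν := hF.integral_prod_left
  have hFSx : Integrable (fun x => ∫ y, S.indicator (F x) y ∂ν) ν := hFS.integral_prod_left
  have hrej : Integrable (S.indicator fun x => π x - ∫ y, F x y ∂ν) ν := (hπ.sub hFx).indicator hS
  rw [integral_congr_ae (ae_of_all _ hpoint), integral_add hFSx hrej,
    hflow, integral_indicator hS, integral_sub hπ.integrableOn hFx.integrableOn]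
  ring

theorem integral_mhKernel_withDensity {ν : Measure α} [SFinite ν] {π : α → ℝ}
    {a : α → α → ℝ} (hπ : Integrable π ν) (hπ0 : ∀ x, 0 ≤ π x)
    (hF : Integrable (uncurry fun x y => π x * a x y) (ν.prod ν))
    (hdb : ∀ x y, π x * a x y = π y * a y x) {S : Set α} (hS : MeasurableSet S) :
    ∫ x, mhKernel ν a x S ∂(ν.withDensity fun x => ENNReal.ofReal (π x))
      = ((ν.withDensity fun x => ENNReal.ofReal (π x)) S).toReal := by
  rw [integral_withDensity_eq_integral_toReal_smul₀ hπ.aemeasurable.ennreal_ofReal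
    (ae_of_all _ fun _ => ENNReal.ofReal_lt_top), toReal_withDensity_ofReal_apply hπ hπ0 hS,
    ← integral_mul_mhKernel_of_detailedBalance hπ hF hdb hS]
  congr 1 with x
  rw [ENNReal.toReal_ofReal (hπ0 x), smul_eq_mul]

variable {ι : Type*} [MeasurableSpace ι] [MeasurableSingletonClass ι] [Fintype ι]
  {ν : Measure α} [SFinite ν]

theorem mhKernel_count_prod_apply {a : ι × α → ι × α → ℝ}
    (ha : ∀ z, Integrable (a z) (Measure.count.prod ν)) (z : ι × α) {S : Set (ι × α)}
    (hS : MeasurableSet S) :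
    mhKernel (Measure.count.prod ν) a z S = ∑ j, ∫ y in Prod.mk j ⁻¹' S, a z (j, y) ∂ν
      + S.indicator (fun z => 1 - ∑ j, ∫ y, a z (j, y) ∂ν) z := by
  simp only [mhKernel, setIntegral_count_prod (ha z) hS, integral_count_prod (ha _)]

end MetropolisHastings

theorem mul_min_div_one_comm {u v : ℝ} (hu : 0 < u) (hv : 0 < v) :
    u * min (v / u) 1 = v * min (u / v) 1 := by
  rw [mul_min_of_nonneg _ _ hu.le, mul_min_of_nonneg _ _ hv.le, mul_div_cancel₀ _ hu.ne',
    mul_div_cancel₀ _ hv.ne', mul_one, mul_one, min_comm]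

section GraphJump

variable {ι α : Type*} {q : ι → ι → ℝ} {c : ℝ} {k : ι × α → ℝ} {L : α → ℝ}

noncomputable def jumpWeight (q : ι → ι → ℝ) (c : ℝ) (L : α → ℝ) (z w : ι × α) : ℝ :=
  q z.1 w.1 * c * min (q w.1 z.1 * L w.2 / (q z.1 w.1 * L z.2)) 1

noncomputable def graphJump (q : ι → ι → ℝ) (c : ℝ) (k : ι × α → ℝ) (L : α → ℝ)
    (z w : ι × α) : ℝ :=
  q z.1 w.1 * c * k w * min (q w.1 z.1 * L w.2 / (q z.1 w.1 * L z.2)) 1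

theorem graphJump_eq_jumpWeight_mul (z w : ι × α) :
    graphJump q c k L z w = jumpWeight q c L z w * k w := by
  unfold graphJump jumpWeight
  ring

theorem graphJump_detailedBalance (hq : ∀ i j, 0 < q i j) (hL : ∀ x, 0 < L x) (Z : ℝ)
    (z w : ι × α) :
    k z * L z.2 / Z * graphJump q c k L z w = k w * L w.2 / Z * graphJump q c k L w z := by
  have h := mul_min_div_one_comm (mul_pos (hq z.1 w.1) (hL z.2)) (mul_pos (hq w.1 z.1) (hL w.2))
  unfold graphJump
  linear_combination (c * k z * k w / Z) * h

theorem exists_norm_jumpWeight_le [Finite ι] (hq : ∀ i j, 0 < q i j) (hL : ∀ x, 0 < L x) :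
    ∃ C, ∀ z w : ι × α, ‖jumpWeight q c L z w‖ ≤ C := by
  obtain ⟨C, hC⟩ := Finite.exists_le (uncurry q)
  refine ⟨C * |c|, fun z w => ?_⟩
  have hmin : |min (q w.1 z.1 * L w.2 / (q z.1 w.1 * L z.2)) 1| ≤ 1 := by
    have := hq z.1 w.1; have := hq w.1 z.1; have := hL z.2; have := hL w.2
    rw [abs_of_nonneg (le_min (by positivity) zero_le_one)]
    exact min_le_right _ _
  rw [jumpWeight, Real.norm_eq_abs, abs_mul, abs_mul, abs_of_pos (hq _ _)]
  calc q z.1 w.1 * |c| * |min (q w.1 z.1 * L w.2 / (q z.1 w.1 * L z.2)) 1|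
      ≤ q z.1 w.1 * |c| * 1 := by gcongr; exact mul_nonneg (hq _ _).le (abs_nonneg c)
    _ ≤ C * |c| := by rw [mul_one]; gcongr; exact hC (z.1, w.1)

variable [Fintype ι] [MeasurableSpace ι] [MeasurableSingletonClass ι] [MeasurableSpace α]
  {ν : Measure α}

theorem measurable_jumpWeight (hLm : Measurable L) :
    Measurable (uncurry (jumpWeight (ι := ι) q c L)) := by
  have hq : Measurable fun p : (ι × α) × (ι × α) => q p.1.1 p.2.1 :=
    (measurable_of_finite (uncurry q)).comp (measurable_fst.fst.prodMk measurable_snd.fst)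
  have hq' : Measurable fun p : (ι × α) × (ι × α) => q p.2.1 p.1.1 :=
    (measurable_of_finite (uncurry q)).comp (measurable_snd.fst.prodMk measurable_fst.fst)
  unfold jumpWeight
  fun_prop

theorem integrable_graphJump (hq : ∀ i j, 0 < q i j) (hL : ∀ x, 0 < L x) (hLm : Measurable L)
    (hk : Integrable k (Measure.count.prod ν)) (z : ι × α) :
    Integrable (graphJump q c k L z) (Measure.count.prod ν) := by
  obtain ⟨C, hC⟩ := exists_norm_jumpWeight_le (c := c) hq hL
  have hmeas : Measurable (jumpWeight q c L z) :=
    (measurable_jumpWeight hLm).comp (measurable_const.prodMk measurable_id)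
  rw [show graphJump q c k L z = fun w => jumpWeight q c L z w * k w from
    funext (graphJump_eq_jumpWeight_mul z)]
  exact hk.bdd_mul hmeas.aestronglyMeasurable (ae_of_all _ (hC z))

theorem integrable_mul_graphJump (hq : ∀ i j, 0 < q i j) (hL : ∀ x, 0 < L x)
    (hLm : Measurable L) {M : ℝ} (hM : ∀ x, L x ≤ M) (hk : Integrable k (Measure.count.prod ν))
    (Z : ℝ) :
    Integrable (uncurry fun z w => k z * L z.2 / Z * graphJump q c k L z w)
      ((Measure.count.prod ν).prod (Measure.count.prod ν)) := by
  obtain ⟨C, hC⟩ := exists_norm_jumpWeight_le (c := c) hq hL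
  have hmeas : Measurable fun p : (ι × α) × (ι × α) => L p.1.2 / Z * jumpWeight q c L p.1 p.2 :=
    ((hLm.comp measurable_fst.snd).div_const Z).mul (measurable_jumpWeight hLm)
  have hbound : ∀ p : (ι × α) × (ι × α),
      ‖L p.1.2 / Z * jumpWeight q c L p.1 p.2‖ ≤ M / |Z| * C := by
    intro p
    rw [norm_mul, norm_div, Real.norm_eq_abs, abs_of_pos (hL _), Real.norm_eq_abs]
    exact mul_le_mul (by gcongr; exact hM _) (hC p.1 p.2) (norm_nonneg _)
      (div_nonneg ((hL p.1.2).le.trans (hM _)) (abs_nonneg Z))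
  refine ((hk.mul_prod hk).mul_bdd hmeas.aestronglyMeasurable (ae_of_all _ hbound)).congr
    (ae_of_all _ fun p => ?_)
  simp only [uncurry, graphJump_eq_jumpWeight_mul]
  ring

end GraphJump

theorem graphProposal_pos {n : ℕ} {ρ : ℝ} (hρ0 : 0 < ρ) (hρ1 : ρ < 1)
    {E : Fin n → Fin n → Prop} [DecidableRel E] {D : Fin n → ℕ} {q : Fin n → Fin n → ℝ}
    (hq : ∀ i j, q i j = ρ / n + (1 - ρ) * (if E i j then (1 : ℝ) else 0) / (D i))
    (i j : Fin n) : 0 < q i j := by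
  rw [hq]
  refine add_pos_of_pos_of_nonneg (div_pos hρ0 (Nat.cast_pos.2 i.pos))
    (div_nonneg (mul_nonneg (by linarith) ?_) (Nat.cast_nonneg _))
  split_ifs <;> norm_num

open scoped Classical

theorem stmt_1_general
    (d B : ℕ)
    (θp : Fin B → EuclideanSpace ℝ (Fin d))
    (K : EuclideanSpace ℝ (Fin d) → ℝ)
    (hKnonneg : ∀ u, 0 ≤ K u)
    (hKint : ∫ u, K u = 1)
    (h : ℝ) (hh : 0 < h)
    (E : Fin B → Fin B → Prop) [DecidableRel E]
    (D : Fin B → ℕ)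
    (ρ : ℝ) (hρ0 : 0 < ρ) (hρ1 : ρ < 1)
    (q : Fin B → Fin B → ℝ)
    (hq : ∀ i j, q i j = ρ / B + (1 - ρ) * (if E i j then (1 : ℝ) else 0) / (D i))
    (L : EuclideanSpace ℝ (Fin d) → ℝ)
    (hLpos : ∀ x, 0 < L x) (hLmeas : Measurable L)
    (hLbdd : BddAbove (Set.range L))
    (πK : EuclideanSpace ℝ (Fin d) → ℝ)
    (hπK : ∀ x, πK x = (1 / (B * h ^ d)) * ∑ i, K (h⁻¹ • (x - θp i)))
    (hpos : 0 < ∫ x, πK x * L x)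
    (r : Fin B → EuclideanSpace ℝ (Fin d) → ℝ)
    (hr : ∀ i x, r i x = 1 - ∑ ℓ, ∫ y,
      q i ℓ * (h ^ d)⁻¹ * K (h⁻¹ • (y - θp ℓ)) * min (q ℓ i * L y / (q i ℓ * L x)) 1)
    (Pc : (Fin B × EuclideanSpace ℝ (Fin d)) → Set (Fin B × EuclideanSpace ℝ (Fin d)) → ℝ)
    (hPc : ∀ i x S, MeasurableSet S → Pc (i, x) S =
      (∑ j, ∫ y in {y | (j, y) ∈ S},
        q i j * (h ^ d)⁻¹ * K (h⁻¹ • (y - θp j)) * min (q j i * L y / (q i j * L x)) 1)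
      + (if (i, x) ∈ S then r i x else 0))
    (μ : Measure (Fin B × EuclideanSpace ℝ (Fin d))) [IsProbabilityMeasure μ]
    (hμ : ∀ (j : Fin B) (A : Set (EuclideanSpace ℝ (Fin d))), MeasurableSet A →
      (μ ({j} ×ˢ A)).toReal =
        (∫ y in A, K (h⁻¹ • (y - θp j)) * L y) /
          ∑ ℓ, ∫ y, K (h⁻¹ • (y - θp ℓ)) * L y) :
    (∀ S, MeasurableSet S → ∫ x, Pc x S ∂μ = (μ S).toReal) ∧
    (∀ A : Set (EuclideanSpace ℝ (Fin d)), MeasurableSet A →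
      ((μ.map Prod.snd) A).toReal = ∫ x in A, πK x * L x / ∫ τ, πK τ * L τ) := by
  set ν := (Measure.count : Measure (Fin B)).prod (volume : Measure (EuclideanSpace ℝ (Fin d)))
  set k : Fin B × EuclideanSpace ℝ (Fin d) → ℝ := fun z => K (h⁻¹ • (z.2 - θp z.1))
  obtain ⟨M, hM⟩ := hLbdd
  have hLM : ∀ x, L x ≤ M := fun x => hM ⟨x, rfl⟩
  have hk : Integrable k ν := integrable_count_prod_iff.2 fun i =>
    ((integrable_of_integral_eq_one hKint).comp_smul (inv_ne_zero hh.ne')).comp_sub_right (θp i)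
  have hkL : Integrable (fun z => k z * L z.2) ν :=
    hk.mul_bdd (hLmeas.comp measurable_snd).aestronglyMeasurable
      (ae_of_all _ fun z => by rw [Real.norm_eq_abs, abs_of_pos (hLpos _)]; exact hLM _)
  have hq0 := graphProposal_pos hρ0 hρ1 hq
  set Z := ∑ ℓ, ∫ y, K (h⁻¹ • (y - θp ℓ)) * L y
  have hπKL : ∫ x, πK x * L x = (B * h ^ d)⁻¹ * Z := by
    simp_rw [hπK, one_div, mul_assoc, Finset.sum_mul]
    rw [integral_const_mul, integral_finsetSum _ fun i _ => integrable_count_prod_iff.1 hkL i]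
  have hBh : (B * h ^ d : ℝ)⁻¹ ≠ 0 := left_ne_zero_of_mul (hπKL ▸ hpos).ne'
  have hZ0 : 0 < Z := pos_of_mul_pos_right (hπKL ▸ hpos) (by positivity)
  set π : Fin B × EuclideanSpace ℝ (Fin d) → ℝ := fun z => k z * L z.2 / Z
  have hπ : Integrable π ν := hkL.div_const Z
  have hπ0 : ∀ z, 0 ≤ π z := fun z => div_nonneg (mul_nonneg (hKnonneg _) (hLpos _).le) hZ0.le
  have hμν : μ = ν.withDensity fun z => ENNReal.ofReal (π z) :=
    eq_withDensity_of_toReal_singleton_prod hπ hπ0 fun j A hA => by rw [hμ j A hA, integral_div]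
  have hjump := integrable_graphJump (c := (h ^ d)⁻¹) hq0 hLpos hLmeas hk
  refine ⟨fun S hS => ?_, fun A hA => ?_⟩
  · have hPcS : ∀ z, Pc z S = mhKernel ν (graphJump q (h ^ d)⁻¹ k L) z S := fun ⟨i, x⟩ => by
      rw [hPc i x S hS, hr i x, mhKernel_count_prod_apply hjump _ hS, Set.indicator_apply]
      rfl
    rw [integral_congr_ae (ae_of_all _ hPcS), hμν]
    exact integral_mhKernel_withDensity hπ hπ0 (integrable_mul_graphJump hq0 hLpos hLmeas hLM hk Z)
      (graphJump_detailedBalance hq0 hLpos Z) hS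
  · rw [hμν, toReal_map_snd_withDensity_count_prod hπ hπ0 hA]
    refine setIntegral_congr_fun hA fun x _ => ?_
    rw [hπKL, hπK x, one_div, mul_assoc, Finset.sum_mul, mul_div_mul_left _ _ hBh, Finset.sum_div]

/-- the measure `μ` is invariant for the graph-enabled MCMC kernel `Pc`,
and its second marginal has Lebesgue density `π̂(θ) = π̂_KDE(θ)L(θ)/∫ π̂_KDE L`. -/
theorem stmt_1
    (d B : ℕ) (hd : 1 ≤ d) (hB : 1 ≤ B)
    (θp : Fin B → EuclideanSpace ℝ (Fin d))
    (K : EuclideanSpace ℝ (Fin d) → ℝ)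
    (hKmeas : Measurable K) (hKnonneg : ∀ u, 0 ≤ K u)
    (hKint : ∫ u, K u = 1)
    (h : ℝ) (hh : 0 < h)
    (E : Fin B → Fin B → Prop) [DecidableRel E]
    (hEsymm : ∀ i j, E i j → E j i) (hEirr : ∀ i, ¬ E i i)
    (D : Fin B → ℕ)
    (hD : ∀ i, D i = (Finset.univ.filter (fun j => E i j)).card)
    (hD1 : ∀ i, 1 ≤ D i)
    (ρ : ℝ) (hρ0 : 0 < ρ) (hρ1 : ρ < 1)
    (q : Fin B → Fin B → ℝ)
    (hq : ∀ i j, q i j = ρ / B + (1 - ρ) * (if E i j then (1 : ℝ) else 0) / (D i))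
    (L : EuclideanSpace ℝ (Fin d) → ℝ)
    (hLpos : ∀ x, 0 < L x) (hLmeas : Measurable L)
    (hLbdd : BddAbove (Set.range L))
    (πK : EuclideanSpace ℝ (Fin d) → ℝ)
    (hπK : ∀ x, πK x = (1 / (B * h ^ d)) * ∑ i, K (h⁻¹ • (x - θp i)))
    (hpos : 0 < ∫ x, πK x * L x)
    (r : Fin B → EuclideanSpace ℝ (Fin d) → ℝ)
    (hr : ∀ i x, r i x = 1 - ∑ ℓ, ∫ y,
      q i ℓ * (h ^ d)⁻¹ * K (h⁻¹ • (y - θp ℓ)) * min (q ℓ i * L y / (q i ℓ * L x)) 1)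
    (Pc : (Fin B × EuclideanSpace ℝ (Fin d)) → Set (Fin B × EuclideanSpace ℝ (Fin d)) → ℝ)
    (hPc : ∀ i x S, MeasurableSet S → Pc (i, x) S =
      (∑ j, ∫ y in {y | (j, y) ∈ S},
        q i j * (h ^ d)⁻¹ * K (h⁻¹ • (y - θp j)) * min (q j i * L y / (q i j * L x)) 1)
      + (if (i, x) ∈ S then r i x else 0))
    (μ : Measure (Fin B × EuclideanSpace ℝ (Fin d))) [IsProbabilityMeasure μ]
    (hμ : ∀ (j : Fin B) (A : Set (EuclideanSpace ℝ (Fin d))), MeasurableSet A →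
      (μ ({j} ×ˢ A)).toReal =
        (∫ y in A, K (h⁻¹ • (y - θp j)) * L y) /
          ∑ ℓ, ∫ y, K (h⁻¹ • (y - θp ℓ)) * L y) :
    (∀ S, MeasurableSet S → ∫ x, Pc x S ∂μ = (μ S).toReal) ∧
    (∀ A : Set (EuclideanSpace ℝ (Fin d)), MeasurableSet A →
      ((μ.map Prod.snd) A).toReal = ∫ x in A, πK x * L x / ∫ τ, πK τ * L τ) :=
  stmt_1_general d B θp K hKnonneg hKint h hh E D ρ hρ0 hρ1 q hq L hLpos hLmeas hLbdd πK hπK hpos r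
    hr Pc hPc μ hμ
end

section
/- As B → ∞, ∫_{ℝ^d} | π̃_B(θ) − π̂_B(θ) | dθ → 0 in probability. -/
/-!
Both estimators are normalisations of nonnegative functions: `π̃_B` of
`A(θ) = Σᵢ K((θ - θᵢ)/h) L(θᵢ)` and `π̂_B` of `G(θ) = Σᵢ K((θ - θᵢ)/h) L(θ)`.
Since `L` is `M`-Lipschitz, `∫ |A - G| ≤ B h^d · M h ∫ K(u)‖u‖ du`, while `∫ A = h^d Σᵢ L(θᵢ)`.
Normalising at most doubles the relative `L¹` error, so
`∫ |π̃_B - π̂_B| ≤ 2 M h_B ∫ K(u)‖u‖ du / (B⁻¹ Σᵢ L(θᵢ))`.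
By the strong law of large numbers the denominator tends almost surely to `∫ π L > 0`,
and `h_B → 0`.
-/

open MeasureTheory Finset Filter Module
open scoped Classical Topology NNReal

theorem integral_abs_div_integral_sub_div_integral_le {α : Type*} [MeasurableSpace α]
    {μ : Measure α} {f g : α → ℝ} (hf : Integrable f μ) (hg : Integrable g μ) (hg0 : 0 ≤ g)
    (hfpos : 0 < ∫ x, f x ∂μ) (hgpos : 0 < ∫ x, g x ∂μ) :
    ∫ x, |f x / ∫ y, f y ∂μ - g x / ∫ y, g y ∂μ| ∂μ ≤ 2 * (∫ x, |f x - g x| ∂μ) / ∫ x, f x ∂μ := by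
  set a := ∫ x, f x ∂μ
  set b := ∫ x, g x ∂μ with hb
  have hdiff : |b - a| ≤ ∫ x, |f x - g x| ∂μ := by
    rw [← integral_sub hg hf]
    refine abs_integral_le_integral_abs.trans_eq (integral_congr_ae (.of_forall fun x => ?_))
    exact abs_sub_comm _ _
  have hI : Integrable (fun x => |f x - g x| / a) μ := (hf.sub hg).abs.div_const a
  have hpt : ∀ x, |f x / a - g x / b| ≤ |f x - g x| / a + g x * (|b - a| / (a * b)) := by
    intro x
    have : f x / a - g x / b = (f x - g x) / a + g x * ((b - a) / (a * b)) := by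
      field_simp; ring
    rw [this]
    refine (abs_add_le _ _).trans_eq ?_
    rw [abs_div, abs_of_pos hfpos, abs_mul, abs_of_nonneg (hg0 x), abs_div,
      abs_of_pos (mul_pos hfpos hgpos)]
  calc ∫ x, |f x / a - g x / b| ∂μ
      ≤ ∫ x, (|f x - g x| / a + g x * (|b - a| / (a * b))) ∂μ :=
        integral_mono_of_nonneg (.of_forall fun _ => abs_nonneg _)
          (hI.add (hg.mul_const _)) (.of_forall hpt)
    _ = (∫ x, |f x - g x| ∂μ + |b - a|) / a := by
        rw [integral_add hI (hg.mul_const _), integral_div, integral_mul_const, ← hb]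
        field_simp
    _ ≤ 2 * (∫ x, |f x - g x| ∂μ) / a := by
        gcongr
        linarith

section WithDensity

variable {α : Type*} [MeasurableSpace α] {μ : Measure α} {p : α → ℝ}

theorem integrable_withDensity_ofReal_iff (hp : Measurable p) (hp0 : ∀ x, 0 ≤ p x)
    {g : α → ℝ} :
    Integrable g (μ.withDensity fun x => ENNReal.ofReal (p x))
      ↔ Integrable (fun x => p x * g x) μ := by
  rw [integrable_withDensity_iff_integrable_smul' hp.ennreal_ofReal
    (.of_forall fun _ => ENNReal.ofReal_lt_top)]
  simp only [ENNReal.toReal_ofReal (hp0 _), smul_eq_mul]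

theorem integral_withDensity_ofReal (hp : Measurable p) (hp0 : ∀ x, 0 ≤ p x) (g : α → ℝ) :
    ∫ x, g x ∂μ.withDensity (fun x => ENNReal.ofReal (p x)) = ∫ x, p x * g x ∂μ := by
  rw [integral_withDensity_eq_integral_toReal_smul hp.ennreal_ofReal
    (.of_forall fun _ => ENNReal.ofReal_lt_top)]
  simp only [ENNReal.toReal_ofReal (hp0 _), smul_eq_mul]

end WithDensity

theorem ae_tendsto_sum_comp_div_of_iIndepFun {Ω α : Type*} [MeasurableSpace Ω]
    [MeasurableSpace α] {P : Measure Ω} {θ : ℕ → Ω → α} (hθ : ∀ i, Measurable (θ i))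
    (hind : ProbabilityTheory.iIndepFun θ P) {ν : Measure α} (hlaw : ∀ i, P.map (θ i) = ν)
    {g : α → ℝ} (hg : Measurable g) (hgi : Integrable g ν) :
    ∀ᵐ ω ∂P, Tendsto (fun n : ℕ => (∑ i ∈ range n, g (θ i ω)) / n) atTop
      (𝓝 (∫ x, g x ∂ν)) := by
  have hmean : ∫ ω, g (θ 0 ω) ∂P = ∫ x, g x ∂ν := by
    rw [← hlaw 0, integral_map (hθ 0).aemeasurable hg.aestronglyMeasurable]
  rw [← hmean]
  refine ProbabilityTheory.strong_law_ae_real (fun i ω => g (θ i ω)) ?_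
    (fun i j hij => (hind.indepFun hij).comp hg hg) fun i => ?_
  · rw [← hlaw 0] at hgi
    exact hgi.comp_measurable (hθ 0)
  · refine ⟨(hg.comp (hθ i)).aemeasurable, (hg.comp (hθ 0)).aemeasurable, ?_⟩
    change Measure.map (g ∘ θ i) P = Measure.map (g ∘ θ 0) P
    rw [← Measure.map_map hg (hθ i), ← Measure.map_map hg (hθ 0), hlaw i, hlaw 0]

theorem tendstoInMeasure_zero_of_abs_le {Ω ι β : Type*} [MeasurableSpace Ω] {P : Measure Ω}
    [PseudoMetricSpace β] {l : Filter ι} {Z : ι → Ω → β} {b : β} {X : ι → Ω → ℝ} {r : ι → ℝ}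
    {δ : ℝ} (hZ : TendstoInMeasure P Z l fun _ => b) (hδ : 0 < δ) (hr : Tendsto r l (𝓝 0))
    (hX : ∀ᶠ i in l, ∀ ω, dist (Z i ω) b < δ → |X i ω| ≤ r i) :
    TendstoInMeasure P X l fun _ => 0 := by
  rw [tendstoInMeasure_iff_dist] at hZ ⊢
  intro ε hε
  refine tendsto_of_tendsto_of_tendsto_of_le_of_le' tendsto_const_nhds (hZ δ hδ)
    (.of_forall fun _ => zero_le) ?_
  filter_upwards [hX, hr.eventually_lt_const hε] with i hXi hri
  refine measure_mono fun ω hω => ?_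
  simp only [Set.mem_ofPred_eq, Real.dist_eq, sub_zero] at hω ⊢
  by_contra! hlt
  linarith [hXi ω hlt]

section Kernel

variable {E : Type*} [NormedAddCommGroup E] [NormedSpace ℝ E] {K f : E → ℝ} {h : ℝ}

theorem abs_kernel_mul_sub_le {C : ℝ≥0} (hK : ∀ u, 0 ≤ K u) (hf : LipschitzWith C f)
    (hh : 0 < h) (x y : E) :
    |K (h⁻¹ • (x - y)) * (f y - f x)| ≤ C * h * (K (h⁻¹ • (x - y)) * ‖h⁻¹ • (x - y)‖) := by
  have hlip : |f y - f x| ≤ C * ‖x - y‖ := by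
    rw [abs_sub_comm]
    simpa [Real.dist_eq, dist_eq_norm] using hf.dist_le_mul x y
  rw [abs_mul, abs_of_nonneg (hK _), norm_smul, Real.norm_eq_abs, abs_inv, abs_of_pos hh]
  calc K (h⁻¹ • (x - y)) * |f y - f x| ≤ K (h⁻¹ • (x - y)) * (C * ‖x - y‖) := by
        gcongr; exact hK _
    _ = C * h * (K (h⁻¹ • (x - y)) * (h⁻¹ * ‖x - y‖)) := by field_simp

theorem kernel_sum_mul_sub_eq (y : ℕ → E) (n : ℕ) (x : E) :
    ∑ i ∈ range n, K (h⁻¹ • (x - y i)) * f (y i) - (∑ i ∈ range n, K (h⁻¹ • (x - y i))) * f x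
      = ∑ i ∈ range n, K (h⁻¹ • (x - y i)) * (f (y i) - f x) := by
  rw [sum_mul, ← sum_sub_distrib]
  simp only [mul_sub]

variable [FiniteDimensional ℝ E] [MeasurableSpace E] [BorelSpace E] {μ : Measure E}
  [μ.IsAddHaarMeasure]

theorem integral_comp_inv_smul_sub (g : E → ℝ) (hh : 0 < h) (y : E) :
    ∫ x, g (h⁻¹ • (x - y)) ∂μ = h ^ finrank ℝ E * ∫ u, g u ∂μ := by
  rw [integral_sub_right_eq_self (fun z => g (h⁻¹ • z)) y,
    Measure.integral_comp_inv_smul_of_nonneg μ g hh.le, smul_eq_mul]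

theorem integrable_kernel_mul_sub {C : ℝ≥0} (hK : ∀ u, 0 ≤ K u) (hKi : Integrable K μ)
    (hKm : Integrable (fun u => K u * ‖u‖) μ) (hf : LipschitzWith C f) (hh : 0 < h) (y : E) :
    Integrable (fun x => K (h⁻¹ • (x - y)) * (f y - f x)) μ := by
  refine Integrable.mono' (((hKm.comp_smul (inv_ne_zero hh.ne')).comp_sub_right y).const_mul
    (C * h)) ?_ (.of_forall fun x => abs_kernel_mul_sub_le hK hf hh x y)
  exact ((hKi.comp_smul (inv_ne_zero hh.ne')).comp_sub_right y).aestronglyMeasurable.mul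
    (continuous_const.sub hf.continuous).aestronglyMeasurable

theorem integral_abs_kernel_mul_sub_le {C : ℝ≥0} (hK : ∀ u, 0 ≤ K u)
    (hKm : Integrable (fun u => K u * ‖u‖) μ) (hf : LipschitzWith C f) (hh : 0 < h) (y : E) :
    ∫ x, |K (h⁻¹ • (x - y)) * (f y - f x)| ∂μ
      ≤ h ^ finrank ℝ E * (C * h * ∫ u, K u * ‖u‖ ∂μ) := by
  calc ∫ x, |K (h⁻¹ • (x - y)) * (f y - f x)| ∂μ
      ≤ ∫ x, C * h * (K (h⁻¹ • (x - y)) * ‖h⁻¹ • (x - y)‖) ∂μ :=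
        integral_mono_of_nonneg (.of_forall fun _ => abs_nonneg _)
          (((hKm.comp_smul (inv_ne_zero hh.ne')).comp_sub_right y).const_mul (C * h))
          (.of_forall fun x => abs_kernel_mul_sub_le hK hf hh x y)
    _ = h ^ finrank ℝ E * (C * h * ∫ u, K u * ‖u‖ ∂μ) := by
        rw [integral_const_mul, integral_comp_inv_smul_sub (fun u => K u * ‖u‖) hh]
        ring

theorem integral_kernel_sum_mul (hKi : Integrable K μ) (hK1 : ∫ u, K u ∂μ = 1) (hh : 0 < h)
    (y : ℕ → E) (n : ℕ) :
    ∫ x, ∑ i ∈ range n, K (h⁻¹ • (x - y i)) * f (y i) ∂μ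
      = h ^ finrank ℝ E * ∑ i ∈ range n, f (y i) := by
  rw [integral_finsetSum _ fun i _ =>
    ((hKi.comp_smul (inv_ne_zero hh.ne')).comp_sub_right (y i)).mul_const _, mul_sum]
  refine sum_congr rfl fun i _ => ?_
  rw [integral_mul_const, integral_comp_inv_smul_sub K hh, hK1, mul_one]

theorem integrable_kernel_sum_mul (hKi : Integrable K μ) (hh : 0 < h) (y : ℕ → E) (n : ℕ) :
    Integrable (fun x => ∑ i ∈ range n, K (h⁻¹ • (x - y i)) * f (y i)) μ :=
  integrable_finsetSum _ fun i _ =>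
    ((hKi.comp_smul (inv_ne_zero hh.ne')).comp_sub_right (y i)).mul_const _

theorem integrable_kernel_sum_mul_self {C : ℝ≥0} (hK : ∀ u, 0 ≤ K u) (hKi : Integrable K μ)
    (hKm : Integrable (fun u => K u * ‖u‖) μ) (hf : LipschitzWith C f) (hh : 0 < h)
    (y : ℕ → E) (n : ℕ) :
    Integrable (fun x => (∑ i ∈ range n, K (h⁻¹ • (x - y i))) * f x) μ := by
  have hdiff := integrable_finsetSum (range n) fun i _ =>
    integrable_kernel_mul_sub (μ := μ) hK hKi hKm hf hh (y i)
  refine ((integrable_kernel_sum_mul (f := f) hKi hh y n).sub hdiff).congr (.of_forall fun x => ?_)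
  simp only [Pi.sub_apply, ← kernel_sum_mul_sub_eq, sub_sub_cancel]

theorem integral_abs_kernel_sum_mul_sub_le {C : ℝ≥0} (hK : ∀ u, 0 ≤ K u)
    (hKi : Integrable K μ) (hKm : Integrable (fun u => K u * ‖u‖) μ) (hf : LipschitzWith C f)
    (hh : 0 < h) (y : ℕ → E) (n : ℕ) :
    ∫ x, |∑ i ∈ range n, K (h⁻¹ • (x - y i)) * f (y i)
        - (∑ i ∈ range n, K (h⁻¹ • (x - y i))) * f x| ∂μ
      ≤ n * (h ^ finrank ℝ E * (C * h * ∫ u, K u * ‖u‖ ∂μ)) := by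
  have hint : ∀ i ∈ range n, Integrable (fun x => |K (h⁻¹ • (x - y i)) * (f (y i) - f x)|) μ :=
    fun i _ => (integrable_kernel_mul_sub hK hKi hKm hf hh (y i)).abs
  calc ∫ x, |∑ i ∈ range n, K (h⁻¹ • (x - y i)) * f (y i)
        - (∑ i ∈ range n, K (h⁻¹ • (x - y i))) * f x| ∂μ
      ≤ ∫ x, ∑ i ∈ range n, |K (h⁻¹ • (x - y i)) * (f (y i) - f x)| ∂μ := by
        refine integral_mono_of_nonneg (.of_forall fun _ => abs_nonneg _)
          (integrable_finsetSum _ hint) (.of_forall fun x => ?_)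
        simp only [kernel_sum_mul_sub_eq]
        exact abs_sum_le_sum_abs _ _
    _ ≤ ∑ _i ∈ range n, h ^ finrank ℝ E * (C * h * ∫ u, K u * ‖u‖ ∂μ) := by
        rw [integral_finsetSum _ hint]
        exact sum_le_sum fun i _ => integral_abs_kernel_mul_sub_le hK hKm hf hh (y i)
    _ = n * (h ^ finrank ℝ E * (C * h * ∫ u, K u * ‖u‖ ∂μ)) := by
        rw [sum_const, card_range, nsmul_eq_mul]

theorem normalized_kernel_sums_close {C : ℝ≥0} (hK : ∀ u, 0 ≤ K u) (hKi : Integrable K μ)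
    (hK1 : ∫ u, K u ∂μ = 1) (hKm : Integrable (fun u => K u * ‖u‖) μ) (hf : LipschitzWith C f)
    (hf0 : ∀ x, 0 ≤ f x) (hh : 0 < h) (y : ℕ → E) (n : ℕ) {c : ℝ} (hc : 0 < c)
    (hsmall : n * (C * h * ∫ u, K u * ‖u‖ ∂μ) < ∑ i ∈ range n, f (y i)) :
    0 < ∫ x, c * (∑ i ∈ range n, K (h⁻¹ • (x - y i))) * f x ∂μ ∧
      ∫ x, |(∑ i ∈ range n, K (h⁻¹ • (x - y i)) * f (y i))
            / (h ^ finrank ℝ E * ∑ i ∈ range n, f (y i))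
          - c * (∑ i ∈ range n, K (h⁻¹ • (x - y i))) * f x
            / ∫ τ, c * (∑ i ∈ range n, K (h⁻¹ • (τ - y i))) * f τ ∂μ| ∂μ
        ≤ 2 * (n * (C * h * ∫ u, K u * ‖u‖ ∂μ)) / ∑ i ∈ range n, f (y i) := by
  set A := fun x => ∑ i ∈ range n, K (h⁻¹ • (x - y i)) * f (y i)
  set G := fun x => (∑ i ∈ range n, K (h⁻¹ • (x - y i))) * f x
  set S := ∑ i ∈ range n, f (y i)
  set δ := n * (C * h * ∫ u, K u * ‖u‖ ∂μ)
  have hδ : 0 ≤ δ := by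
    have : 0 ≤ ∫ u, K u * ‖u‖ ∂μ := integral_nonneg fun u => mul_nonneg (hK u) (norm_nonneg u)
    positivity
  have hd : 0 < h ^ finrank ℝ E := pow_pos hh _
  have hA : Integrable A μ := integrable_kernel_sum_mul hKi hh y n
  have hG : Integrable G μ := integrable_kernel_sum_mul_self hK hKi hKm hf hh y n
  have hG0 : 0 ≤ G := fun x => mul_nonneg (sum_nonneg fun i _ => hK _) (hf0 x)
  have hIA : ∫ x, A x ∂μ = h ^ finrank ℝ E * S := integral_kernel_sum_mul hKi hK1 hh y n
  have hAG : ∫ x, |A x - G x| ∂μ ≤ h ^ finrank ℝ E * δ := by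
    have := integral_abs_kernel_sum_mul_sub_le hK hKi hKm hf hh y n
    linarith
  have hIG : 0 < ∫ x, G x ∂μ := by
    have : ∫ x, A x ∂μ - ∫ x, G x ∂μ ≤ ∫ x, |A x - G x| ∂μ := by
      rw [← integral_sub hA hG]
      exact integral_mono (hA.sub hG) (hA.sub hG).abs fun x => le_abs_self _
    nlinarith
  have hscale : ∀ x, c * (∑ i ∈ range n, K (h⁻¹ • (x - y i))) * f x
      / ∫ τ, c * (∑ i ∈ range n, K (h⁻¹ • (τ - y i))) * f τ ∂μ = G x / ∫ τ, G τ ∂μ := by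
    intro x
    simp only [G, mul_assoc, integral_const_mul]
    exact mul_div_mul_left _ _ hc.ne'
  refine ⟨?_, ?_⟩
  · simp only [mul_assoc, integral_const_mul]
    exact mul_pos hc hIG
  · simp only [hscale, ← hIA]
    calc ∫ x, |A x / ∫ τ, A τ ∂μ - G x / ∫ τ, G τ ∂μ| ∂μ
        ≤ 2 * (∫ x, |A x - G x| ∂μ) / ∫ x, A x ∂μ :=
          integral_abs_div_integral_sub_div_integral_le hA hG hG0 (by rw [hIA]; nlinarith) hIG
      _ ≤ 2 * (h ^ finrank ℝ E * δ) / (h ^ finrank ℝ E * S) := by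
          rw [hIA]
          gcongr
          nlinarith
      _ = 2 * δ / S := by
          field_simp

theorem normalized_kernel_sums_close_of_lt_average {C : ℝ≥0} (hK : ∀ u, 0 ≤ K u)
    (hKi : Integrable K μ) (hK1 : ∫ u, K u ∂μ = 1) (hKm : Integrable (fun u => K u * ‖u‖) μ)
    (hf : LipschitzWith C f) (hf0 : ∀ x, 0 ≤ f x) (hh : 0 < h) (y : ℕ → E) (n : ℕ) {ℓ : ℝ}
    (hℓ : 0 < ℓ) (hCh : C * h * ∫ u, K u * ‖u‖ ∂μ < ℓ / 4)
    (hS : ℓ / 2 < (∑ i ∈ range n, f (y i)) / n) :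
    0 < ∑ i ∈ range n, f (y i) ∧
      0 < ∫ x, 1 / (n * h ^ finrank ℝ E) * (∑ i ∈ range n, K (h⁻¹ • (x - y i))) * f x ∂μ ∧
      ∫ x, |(∑ i ∈ range n, K (h⁻¹ • (x - y i)) * f (y i))
            / (h ^ finrank ℝ E * ∑ i ∈ range n, f (y i))
          - 1 / (n * h ^ finrank ℝ E) * (∑ i ∈ range n, K (h⁻¹ • (x - y i))) * f x
            / ∫ τ, 1 / (n * h ^ finrank ℝ E) * (∑ i ∈ range n, K (h⁻¹ • (τ - y i))) * f τ ∂μ| ∂μ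
        ≤ 4 * (C * h * ∫ u, K u * ‖u‖ ∂μ) / ℓ := by
  set S := ∑ i ∈ range n, f (y i)
  set δ := C * h * ∫ u, K u * ‖u‖ ∂μ
  have hδ : 0 ≤ δ := by
    have : 0 ≤ ∫ u, K u * ‖u‖ ∂μ := integral_nonneg fun u => mul_nonneg (hK u) (norm_nonneg u)
    positivity
  have hn : 0 < n := by
    rcases Nat.eq_zero_or_pos n with rfl | hn
    · simp at hS; linarith
    · exact hn
  have hnS : ℓ / 2 * n < S := by rwa [← lt_div_iff₀ (by exact_mod_cast hn)]
  have hSpos : 0 < S := lt_of_le_of_lt (by positivity) hnS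
  obtain ⟨hpos, hbound⟩ := normalized_kernel_sums_close (μ := μ) hK hKi hK1 hKm hf hf0 hh y n
    (c := 1 / (n * h ^ finrank ℝ E)) (by positivity) (by nlinarith)
  refine ⟨hSpos, hpos, hbound.trans ?_⟩
  rw [div_le_div_iff₀ hSpos hℓ]
  nlinarith

end Kernel

theorem stmt_5_general
    (d : ℕ)
    (π : EuclideanSpace ℝ (Fin d) → ℝ)
    (hπnonneg : ∀ x, 0 ≤ π x) (hπmeas : Measurable π)
    (M : ℝ)
    (L : EuclideanSpace ℝ (Fin d) → ℝ)
    (hLnonneg : ∀ x, 0 ≤ L x)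
    (hLlip : ∀ x y, |L x - L y| ≤ M * ‖x - y‖)
    (hπL0 : 0 < ∫ x, π x * L x) (hπLint : Integrable (fun x => π x * L x))
    (K : EuclideanSpace ℝ (Fin d) → ℝ)
    (hKnonneg : ∀ u, 0 ≤ K u) (hKint : ∫ u, K u = 1)
    (hKmom : Integrable (fun u => K u * ‖u‖))
    (Ω : Type) [MeasureSpace Ω] [IsProbabilityMeasure (volume : Measure Ω)]
    (θs : ℕ → Ω → EuclideanSpace ℝ (Fin d))
    (hθmeas : ∀ i, Measurable (θs i))
    (hiid : ProbabilityTheory.iIndepFun θs (volume : Measure Ω))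
    (hlaw : ∀ i, Measure.map (θs i) (volume : Measure Ω) =
      volume.withDensity (fun x => ENNReal.ofReal (π x)))
    (hb : ℕ → ℝ) (hhb : ∀ n, 0 < hb n)
    (hb0 : Tendsto hb atTop (nhds 0))
    (KDE : ℕ → Ω → EuclideanSpace ℝ (Fin d) → ℝ)
    (hKDE : ∀ n ω x, KDE n ω x =
      (1 / (n * hb n ^ d)) * ∑ i ∈ Finset.range n, K ((hb n)⁻¹ • (x - θs i ω)))
    (πtil : ℕ → Ω → EuclideanSpace ℝ (Fin d) → ℝ)
    (hπtil : ∀ n ω x, πtil n ω x =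
      (∑ i ∈ Finset.range n, K ((hb n)⁻¹ • (x - θs i ω)) * L (θs i ω)) /
        (hb n ^ d * ∑ i ∈ Finset.range n, L (θs i ω)))
    (πhat : ℕ → Ω → EuclideanSpace ℝ (Fin d) → ℝ)
    (hπhat : ∀ n ω x, πhat n ω x = KDE n ω x * L x / ∫ τ, KDE n ω τ * L τ)
    (X : ℕ → Ω → ℝ)
    -- the L¹ distance between `π̃_B` and `π̂_B`, set to `0` by convention on the degenerate event
    (hX : ∀ n ω, X n ω =
      if 0 < ∑ i ∈ Finset.range n, L (θs i ω) ∧ 0 < ∫ τ, KDE n ω τ * L τ then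
        ∫ x, |πtil n ω x - πhat n ω x|
      else 0) :
    TendstoInMeasure (volume : Measure Ω) X atTop (fun _ => (0 : ℝ)) := by
  have hLip : LipschitzWith M.toNNReal L := .of_dist_le' fun x y => by
    simpa [Real.dist_eq, dist_eq_norm] using hLlip x y
  have hLm : Measurable L := hLip.continuous.measurable
  set C : ℝ := (M.toNNReal : ℝ)
  have hKi : Integrable K := .of_integral_ne_zero (by rw [hKint]; exact one_ne_zero)
  set m := ∫ u, K u * ‖u‖
  set ℓ := ∫ x, π x * L x
  have hslln : TendstoInMeasure volume (fun n ω => (∑ i ∈ range n, L (θs i ω)) / n) atTop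
      fun _ => ℓ := by
    refine tendstoInMeasure_of_tendsto_ae (fun n => ?_) ?_
    · exact ((Finset.measurable_sum _ fun i _ => hLm.comp (hθmeas i)).div_const _)
        |>.aestronglyMeasurable
    · have := ae_tendsto_sum_comp_div_of_iIndepFun hθmeas hiid hlaw hLm
        ((integrable_withDensity_ofReal_iff hπmeas hπnonneg).2 hπLint)
      rwa [integral_withDensity_ofReal hπmeas hπnonneg] at this
  have hbias : Tendsto (fun n => C * hb n * m) atTop (𝓝 0) := by
    simpa using (hb0.const_mul C).mul_const m
  refine tendstoInMeasure_zero_of_abs_le hslln (half_pos hπL0)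
    (by simpa using (hbias.const_mul 4).div_const ℓ) ?_
  filter_upwards [hbias.eventually_lt_const (by positivity : 0 < ℓ / 4)] with n hn ω hω
  rw [Real.dist_eq, abs_lt] at hω
  obtain ⟨hSpos, hpos, hbound⟩ := normalized_kernel_sums_close_of_lt_average hKnonneg hKi hKint
    hKmom hLip hLnonneg (hhb n) (fun i => θs i ω) n hπL0 hn (by linarith [hω.1])
  rw [finrank_euclideanSpace_fin] at hpos hbound
  have hXeq : X n ω = ∫ x, |πtil n ω x - πhat n ω x| := by
    rw [hX, if_pos]
    simpa only [hKDE] using ⟨hSpos, hpos⟩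
  rw [hXeq, abs_of_nonneg (integral_nonneg fun _ => abs_nonneg _)]
  simpa only [hπtil, hπhat, hKDE] using hbound

/-- `∫ |π̃_B − π̂_B| → 0` in probability as `B → ∞`. -/
theorem stmt_5
    (d : ℕ) (hd : 1 ≤ d)
    (π : EuclideanSpace ℝ (Fin d) → ℝ)
    (hπnonneg : ∀ x, 0 ≤ π x) (hπmeas : Measurable π) (hπint : ∫ x, π x = 1)
    (M : ℝ) (hM : 0 < M)
    (L : EuclideanSpace ℝ (Fin d) → ℝ)
    (hLnonneg : ∀ x, 0 ≤ L x) (hLmeas : Measurable L)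
    (hLlip : ∀ x y, |L x - L y| ≤ M * ‖x - y‖)
    (hLbdd : BddAbove (Set.range L))
    (hπL0 : 0 < ∫ x, π x * L x) (hπLint : Integrable (fun x => π x * L x))
    (K : EuclideanSpace ℝ (Fin d) → ℝ)
    (hKmeas : Measurable K) (hKnonneg : ∀ u, 0 ≤ K u) (hKint : ∫ u, K u = 1)
    (hKmom : Integrable (fun u => K u * ‖u‖))
    (Ω : Type) [MeasureSpace Ω] [IsProbabilityMeasure (volume : Measure Ω)]
    (θs : ℕ → Ω → EuclideanSpace ℝ (Fin d))
    (hθmeas : ∀ i, Measurable (θs i))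
    (hiid : ProbabilityTheory.iIndepFun θs (volume : Measure Ω))
    (hlaw : ∀ i, Measure.map (θs i) (volume : Measure Ω) =
      volume.withDensity (fun x => ENNReal.ofReal (π x)))
    (hb : ℕ → ℝ) (hhb : ∀ n, 0 < hb n)
    (hb0 : Tendsto hb atTop (nhds 0))
    (KDE : ℕ → Ω → EuclideanSpace ℝ (Fin d) → ℝ)
    (hKDE : ∀ n ω x, KDE n ω x =
      (1 / (n * hb n ^ d)) * ∑ i ∈ Finset.range n, K ((hb n)⁻¹ • (x - θs i ω)))
    (πtil : ℕ → Ω → EuclideanSpace ℝ (Fin d) → ℝ)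
    (hπtil : ∀ n ω x, πtil n ω x =
      (∑ i ∈ Finset.range n, K ((hb n)⁻¹ • (x - θs i ω)) * L (θs i ω)) /
        (hb n ^ d * ∑ i ∈ Finset.range n, L (θs i ω)))
    (πhat : ℕ → Ω → EuclideanSpace ℝ (Fin d) → ℝ)
    (hπhat : ∀ n ω x, πhat n ω x = KDE n ω x * L x / ∫ τ, KDE n ω τ * L τ)
    (X : ℕ → Ω → ℝ)
    -- the L¹ distance between `π̃_B` and `π̂_B`, set to `0` by convention on the degenerate event
    (hX : ∀ n ω, X n ω =
      if 0 < ∑ i ∈ Finset.range n, L (θs i ω) ∧ 0 < ∫ τ, KDE n ω τ * L τ then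
        ∫ x, |πtil n ω x - πhat n ω x|
      else 0) :
    TendstoInMeasure (volume : Measure Ω) X atTop (fun _ => (0 : ℝ)) :=
  stmt_5_general d π hπnonneg hπmeas M L hLnonneg hLlip hπL0 hπLint K hKnonneg hKint hKmom Ω θs
    hθmeas hiid hlaw hb hhb hb0 KDE hKDE πtil hπtil πhat hπhat X hX
end

section
/- For all i, j ∈ {1,…,B}, P_d(i,j) ≥ (ρ/B)·min{ L(j)/L(i), 1 }. Consequently, with π_d(j) = L(j)/Σ_{ℓ=1}^B L(ℓ), the Doeblin minorization P_d(i,j) ≥ ( ρ Σ_{ℓ=1}^B L(ℓ) / (B·max_{ℓ ∈ {1,…,B}} L(ℓ)) ) · π_d(j) holds for all i, j. -/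
/-!
Every proposal probability is at least `ρ / B`. Off the diagonal,
`q(i,j) · min (q(j,i) L(j) / (q(i,j) L(i))) 1 = min (q(j,i) L(j) / L(i)) (q(i,j))`,
which is at least `(ρ / B) · min (L(j) / L(i)) 1`. On the diagonal, rejected mass only adds to
`P(i,i)`, so `P(i,i) ≥ q(i,i) ≥ ρ / B`. Bounding `L(i)` by `max L` turns the ratio bound into
the Doeblin minorization by `π_d`.
-/

open Finset

noncomputable def graphProposal {ι : Type*} [Fintype ι] (E : ι → ι → Prop) [DecidableRel E]
    (ρ : ℝ) (i j : ι) : ℝ :=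
  ρ / Fintype.card ι + (1 - ρ) * (if E i j then 1 else 0) / #{k | E i k}

section GraphProposal

variable {ι : Type*} [Fintype ι] (E : ι → ι → Prop) [DecidableRel E] {ρ : ℝ}

theorem div_card_le_graphProposal (hρ : ρ ≤ 1) (i j : ι) :
    ρ / Fintype.card ι ≤ graphProposal E ρ i j := by
  unfold graphProposal
  have : 0 ≤ (1 - ρ) * (if E i j then (1 : ℝ) else 0) / #{k | E i k} := by
    apply div_nonneg (mul_nonneg (by linarith) (by split_ifs <;> norm_num)) (Nat.cast_nonneg _)
  linarith

theorem sum_graphProposal_le_one (hρ : ρ ≤ 1) (i : ι) : ∑ j, graphProposal E ρ i j ≤ 1 := by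
  have hcard : (Fintype.card ι : ℝ) ≠ 0 := Nat.cast_ne_zero.mpr (Fintype.card_pos_iff.mpr ⟨i⟩).ne'
  -- the neighbour part has total mass `(1 - ρ) · D / D`, which is `0` for an isolated vertex
  have hdeg : ∑ j, (if E i j then (1 : ℝ) else 0) = #{k | E i k} := by rw [sum_boole]
  calc ∑ j, graphProposal E ρ i j
      = ρ + (1 - ρ) * ((#{k | E i k} : ℝ) / #{k | E i k}) := by
        simp only [graphProposal, sum_add_distrib, sum_const, card_univ, nsmul_eq_mul,
          mul_div_cancel₀ _ hcard, ← sum_div, ← mul_sum, hdeg, mul_div_assoc]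
    _ ≤ ρ + (1 - ρ) * 1 :=
        add_le_add_right (mul_le_mul_of_nonneg_left (div_self_le_one _) (sub_nonneg.mpr hρ)) ρ
    _ = 1 := by ring

end GraphProposal

theorem mul_min_div_one {a b : ℝ} (ha : 0 < a) : a * min (b / a) 1 = min b a := by
  rw [mul_min_of_nonneg _ _ ha.le, mul_div_cancel₀ _ ha.ne', mul_one]

theorem mul_min_le_mul_min_acceptance {a b c r : ℝ} (hc : 0 < c) (ha : c ≤ a) (hb : c ≤ b)
    (hr : 0 ≤ r) : c * min r 1 ≤ a * min (b * r / a) 1 := by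
  rw [mul_min_div_one (hc.trans_le ha), mul_min_of_nonneg _ _ hc.le, mul_one]
  exact min_le_min (by gcongr) ha

theorem le_of_eq_one_sub_sum_erase {ι : Type*} [Fintype ι] [DecidableEq ι] {p q : ι → ℝ} {i : ι}
    (hp : p i = 1 - ∑ j ∈ univ.erase i, p j) (hpq : ∀ j, j ≠ i → p j ≤ q j)
    (hq : ∑ j, q j ≤ 1) : q i ≤ p i := by
  have hsum : ∑ j ∈ univ.erase i, p j ≤ ∑ j ∈ univ.erase i, q j :=
    sum_le_sum fun j hj => hpq j (ne_of_mem_erase hj)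
  have hsplit := add_sum_erase univ q (mem_univ i)
  linarith

theorem div_le_min_div_one {x y M : ℝ} (hx : 0 < x) (hy : 0 ≤ y) (hxM : x ≤ M) (hyM : y ≤ M) :
    y / M ≤ min (y / x) 1 :=
  le_min (div_le_div_of_nonneg_left hy hx hxM) (div_le_one_of_le₀ hyM (hx.le.trans hxM))

section MetropolisHastings

variable {ι : Type*} [Fintype ι] [DecidableEq ι] {q P : ι → ι → ℝ} {L : ι → ℝ} {c : ℝ}

theorem le_metropolisHastings (hc : 0 < c) (hqc : ∀ i j, c ≤ q i j)
    (hq : ∀ i, ∑ j, q i j ≤ 1) (hL : ∀ i, 0 < L i)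
    (hPoff : ∀ i j, i ≠ j → P i j = q i j * min (q j i * L j / (q i j * L i)) 1)
    (hPdiag : ∀ i, P i i = 1 - ∑ j ∈ univ.erase i, P i j) (i j : ι) :
    c * min (L j / L i) 1 ≤ P i j := by
  obtain rfl | hij := eq_or_ne i j
  · have hPq : ∀ k, k ≠ i → P i k ≤ q i k := fun k hk => by
      rw [hPoff i k hk.symm]
      exact mul_le_of_le_one_right (hc.trans_le (hqc i k)).le (min_le_right _ _)
    calc c * min (L i / L i) 1 ≤ c := mul_le_of_le_one_right hc.le (min_le_right _ _)
      _ ≤ q i i := hqc i i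
      _ ≤ P i i := le_of_eq_one_sub_sum_erase (hPdiag i) hPq (hq i)
  · have hP : P i j = q i j * min (q j i * (L j / L i) / q i j) 1 := by
      rw [hPoff i j hij]
      congr 2
      ring
    rw [hP]
    exact mul_min_le_mul_min_acceptance hc (hqc i j) (hqc j i) (div_pos (hL j) (hL i)).le

end MetropolisHastings

theorem mul_div_le_of_le_mul_min_div {ι : Type*} {P : ι → ι → ℝ} {L : ι → ℝ} {c M : ℝ}
    (hc : 0 ≤ c) (hL : ∀ i, 0 < L i) (hM : ∀ i, L i ≤ M)
    (hP : ∀ i j, c * min (L j / L i) 1 ≤ P i j) (i j : ι) : c * (L j / M) ≤ P i j :=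
  (mul_le_mul_of_nonneg_left (div_le_min_div_one (hL i) (hL j).le (hM i) (hM j)) hc).trans
    (hP i j)

theorem stmt_7_general
    (B : ℕ) (hB : 1 ≤ B)
    (E : Fin B → Fin B → Prop) [DecidableRel E]
    (D : Fin B → ℕ)
    (hD : ∀ i, D i = (Finset.univ.filter (fun j => E i j)).card)
    (ρ : ℝ) (hρ0 : 0 < ρ) (hρ1 : ρ < 1)
    (q : Fin B → Fin B → ℝ)
    (hq : ∀ i j, q i j = ρ / B + (1 - ρ) * (if E i j then (1 : ℝ) else 0) / (D i))
    (L : Fin B → ℝ) (hL : ∀ i, 0 < L i)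
    (P : Fin B → Fin B → ℝ)
    (hPoff : ∀ i j, i ≠ j → P i j = q i j * min (q j i * L j / (q i j * L i)) 1)
    (hPdiag : ∀ i, P i i = 1 - ∑ j ∈ Finset.univ.erase i, P i j)
    (πd : Fin B → ℝ) (hπd : ∀ j, πd j = L j / ∑ ℓ, L ℓ) :
    (∀ i j, ρ / B * min (L j / L i) 1 ≤ P i j) ∧
    (∀ i j, ρ * (∑ ℓ, L ℓ) /
        (B * Finset.univ.sup' ⟨⟨0, hB⟩, Finset.mem_univ _⟩ L) * πd j ≤ P i j) := by
  obtain rfl : q = graphProposal E ρ := by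
    funext i j
    rw [hq, hD, graphProposal, Fintype.card_fin]
  have hc : 0 < ρ / B := div_pos hρ0 (by exact_mod_cast hB)
  have hqc : ∀ i j, ρ / B ≤ graphProposal E ρ i j := by
    simpa only [Fintype.card_fin] using div_card_le_graphProposal E hρ1.le
  have hminor := le_metropolisHastings hc hqc (sum_graphProposal_le_one E hρ1.le) hL hPoff hPdiag
  refine ⟨hminor, fun i j => ?_⟩
  have hsum : 0 < ∑ ℓ, L ℓ := sum_pos (fun ℓ _ => hL ℓ) ⟨⟨0, hB⟩, mem_univ _⟩
  set M := univ.sup' ⟨⟨0, hB⟩, mem_univ _⟩ L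
  calc ρ * (∑ ℓ, L ℓ) / (B * M) * πd j = ρ / B * (L j / M) := by
        rw [hπd]; field_simp
    _ ≤ P i j := mul_div_le_of_le_mul_min_div hc.le hL (fun ℓ => le_sup' L (mem_univ ℓ)) hminor i j

/-- the Doeblin minorization `P_d(i,j) ≥ (ρ/B)·min{L(j)/L(i), 1}` and
`P_d(i,j) ≥ (ρ Σ L / (B·max L))·π_d(j)` for the graph-enabled discretized MCMC. -/
theorem stmt_7
    (B : ℕ) (hB : 1 ≤ B)
    (E : Fin B → Fin B → Prop) [DecidableRel E]
    (hEsymm : ∀ i j, E i j → E j i) (hEirr : ∀ i, ¬ E i i)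
    (D : Fin B → ℕ)
    (hD : ∀ i, D i = (Finset.univ.filter (fun j => E i j)).card)
    (hD1 : ∀ i, 1 ≤ D i)
    (ρ : ℝ) (hρ0 : 0 < ρ) (hρ1 : ρ < 1)
    (q : Fin B → Fin B → ℝ)
    (hq : ∀ i j, q i j = ρ / B + (1 - ρ) * (if E i j then (1 : ℝ) else 0) / (D i))
    (L : Fin B → ℝ) (hL : ∀ i, 0 < L i)
    (P : Fin B → Fin B → ℝ)
    (hPoff : ∀ i j, i ≠ j → P i j = q i j * min (q j i * L j / (q i j * L i)) 1)
    (hPdiag : ∀ i, P i i = 1 - ∑ j ∈ Finset.univ.erase i, P i j)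
    (πd : Fin B → ℝ) (hπd : ∀ j, πd j = L j / ∑ ℓ, L ℓ) :
    (∀ i j, ρ / B * min (L j / L i) 1 ≤ P i j) ∧
    (∀ i j, ρ * (∑ ℓ, L ℓ) /
        (B * Finset.univ.sup' ⟨⟨0, hB⟩, Finset.mem_univ _⟩ L) * πd j ≤ P i j) :=
  stmt_7_general B hB E D hD ρ hρ0 hρ1 q hq L hL P hPoff hPdiag πd hπd
end

section
/- For every probability vector ν on {1,…,B} and every t ∈ ℕ, ‖ν P_d^t − π_d‖_TV ≤ ( 1 − ρ Σ_{ℓ=1}^B L(ℓ) / (B·max_{ℓ ∈ {1,…,B}} L(ℓ)) )^t, where π_d(j) = L(j)/Σ_{ℓ=1}^B L(ℓ). -/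
/-!
The chain is a Metropolis–Hastings chain whose proposal puts mass at least `ρ / B` on every
state, so each entry `P i j` is at least `ρ L j / (B max L) = ε π_d j` with
`ε = ρ Σ L / (B max L)` (Doeblin's minorization). Writing `P = ε 𝟙 π_d + (P - ε 𝟙 π_d)`, the first
part annihilates signed vectors of total mass zero and the second has nonnegative rows of mass
`1 - ε`, so `ν P^t - π_d` shrinks in `ℓ¹` by the factor `1 - ε` at every step; `π_d` is stationary
by detailed balance. The total variation distance is half the `ℓ¹` distance.
-/

open Finset

section Doeblin

variable {ι : Type*} [Fintype ι] {P : ι → ι → ℝ} {π : ι → ℝ} {ε : ℝ}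

theorem sum_mul_eq_self_of_detailedBalance (hProw : ∀ i, ∑ j, P i j = 1) {w : ι → ℝ}
    (hdb : ∀ i j, w i * P i j = w j * P j i) (j : ι) : ∑ i, w i * P i j = w j := by
  simp only [hdb _ j, ← mul_sum, hProw, mul_one]

theorem sum_sum_mul_eq_sum_of_rowSum (hProw : ∀ i, ∑ j, P i j = 1) (v : ι → ℝ) :
    ∑ j, ∑ i, v i * P i j = ∑ i, v i := by
  rw [sum_comm]
  simp only [← mul_sum, hProw, mul_one]

theorem le_one_of_minorization [Nonempty ι] (hProw : ∀ i, ∑ j, P i j = 1)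
    (hπ : ∑ j, π j = 1) (hmin : ∀ i j, ε * π j ≤ P i j) : ε ≤ 1 := by
  obtain ⟨i⟩ := ‹Nonempty ι›
  calc ε = ∑ j, ε * π j := by rw [← mul_sum, hπ, mul_one]
    _ ≤ ∑ j, P i j := sum_le_sum fun j _ => hmin i j
    _ = 1 := hProw i

theorem sum_abs_sum_mul_le_of_minorization (hProw : ∀ i, ∑ j, P i j = 1)
    (hπ : ∑ j, π j = 1) (hmin : ∀ i j, ε * π j ≤ P i j) {μ : ι → ℝ} (hμ : ∑ i, μ i = 0) :
    ∑ j, |∑ i, μ i * P i j| ≤ (1 - ε) * ∑ i, |μ i| := by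
  have hshift : ∀ j, ∑ i, μ i * P i j = ∑ i, μ i * (P i j - ε * π j) := by
    intro j
    simp only [mul_sub, sum_sub_distrib, ← sum_mul, hμ, zero_mul, sub_zero]
  calc ∑ j, |∑ i, μ i * P i j| ≤ ∑ j, ∑ i, |μ i| * (P i j - ε * π j) := by
        gcongr with j
        rw [hshift]
        refine (abs_sum_le_sum_abs _ _).trans_eq (sum_congr rfl fun i _ => ?_)
        rw [abs_mul, abs_of_nonneg (sub_nonneg.2 (hmin i j))]
    _ = ∑ i, |μ i| * (1 - ε) := by
        rw [sum_comm]
        refine sum_congr rfl fun i _ => ?_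
        rw [← mul_sum, sum_sub_distrib, hProw, ← mul_sum, hπ, mul_one]
    _ = (1 - ε) * ∑ i, |μ i| := by rw [← sum_mul, mul_comm]

theorem two_mul_abs_sum_le_sum_abs [DecidableEq ι] {μ : ι → ℝ} (hμ : ∑ i, μ i = 0)
    (A : Finset ι) : 2 * |∑ i ∈ A, μ i| ≤ ∑ i, |μ i| := by
  have hcompl : ∑ i ∈ Aᶜ, μ i = -∑ i ∈ A, μ i := by
    rw [eq_neg_iff_add_eq_zero, add_comm, sum_add_sum_compl, hμ]
  calc 2 * |∑ i ∈ A, μ i| = |∑ i ∈ A, μ i| + |∑ i ∈ Aᶜ, μ i| := by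
        rw [hcompl, abs_neg, two_mul]
    _ ≤ ∑ i ∈ A, |μ i| + ∑ i ∈ Aᶜ, |μ i| :=
        add_le_add (abs_sum_le_sum_abs _ _) (abs_sum_le_sum_abs _ _)
    _ = ∑ i, |μ i| := sum_add_sum_compl _ _

theorem sum_abs_sub_le_two {ν : ι → ℝ} (hν : ∀ i, 0 ≤ ν i) (hπ0 : ∀ i, 0 ≤ π i)
    (hνsum : ∑ i, ν i = 1) (hπ : ∑ i, π i = 1) : ∑ i, |ν i - π i| ≤ 2 := by
  calc ∑ i, |ν i - π i| ≤ ∑ i, (ν i + π i) :=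
        sum_le_sum fun i _ => abs_sub_le_iff.2 ⟨by linarith [hπ0 i], by linarith [hν i]⟩
    _ = 2 := by rw [sum_add_distrib, hνsum, hπ]; norm_num

variable {νt : ℕ → ι → ℝ}

theorem sum_iterate_eq_one (hProw : ∀ i, ∑ j, P i j = 1) (h0 : ∑ i, νt 0 i = 1)
    (hrec : ∀ t j, νt (t + 1) j = ∑ i, νt t i * P i j) (t : ℕ) : ∑ i, νt t i = 1 := by
  induction t with
  | zero => exact h0
  | succ t ih => simp only [hrec, sum_sum_mul_eq_sum_of_rowSum hProw, ih]

theorem sum_abs_iterate_sub_le_of_minorization [Nonempty ι] (hProw : ∀ i, ∑ j, P i j = 1)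
    (hπ : ∑ j, π j = 1) (hstat : ∀ j, ∑ i, π i * P i j = π j)
    (hmin : ∀ i j, ε * π j ≤ P i j) (h0 : ∑ i, νt 0 i = 1)
    (hrec : ∀ t j, νt (t + 1) j = ∑ i, νt t i * P i j) (t : ℕ) :
    ∑ j, |νt t j - π j| ≤ (1 - ε) ^ t * ∑ j, |νt 0 j - π j| := by
  induction t with
  | zero => simp
  | succ t ih =>
    have hμ : ∑ i, (νt t i - π i) = 0 := by
      rw [sum_sub_distrib, sum_iterate_eq_one hProw h0 hrec, hπ, sub_self]
    have hstep : ∀ j, νt (t + 1) j - π j = ∑ i, (νt t i - π i) * P i j := by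
      intro j
      simp only [sub_mul, sum_sub_distrib, hrec, hstat]
    have hε : 0 ≤ 1 - ε := sub_nonneg.2 (le_one_of_minorization hProw hπ hmin)
    calc ∑ j, |νt (t + 1) j - π j| = ∑ j, |∑ i, (νt t i - π i) * P i j| := by
          simp only [hstep]
      _ ≤ (1 - ε) * ∑ i, |νt t i - π i| :=
          sum_abs_sum_mul_le_of_minorization hProw hπ hmin hμ
      _ ≤ (1 - ε) * ((1 - ε) ^ t * ∑ j, |νt 0 j - π j|) := by gcongr
      _ = (1 - ε) ^ (t + 1) * ∑ j, |νt 0 j - π j| := by ring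

theorem abs_sum_iterate_sub_le_pow_of_minorization [Nonempty ι] [DecidableEq ι]
    (hProw : ∀ i, ∑ j, P i j = 1) (hπ0 : ∀ j, 0 ≤ π j) (hπ : ∑ j, π j = 1)
    (hstat : ∀ j, ∑ i, π i * P i j = π j) (hmin : ∀ i j, ε * π j ≤ P i j)
    (hν0 : ∀ i, 0 ≤ νt 0 i) (h0 : ∑ i, νt 0 i = 1)
    (hrec : ∀ t j, νt (t + 1) j = ∑ i, νt t i * P i j) (t : ℕ) (A : Finset ι) :
    |∑ j ∈ A, νt t j - ∑ j ∈ A, π j| ≤ (1 - ε) ^ t := by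
  have hμ : ∑ j, (νt t j - π j) = 0 := by
    rw [sum_sub_distrib, sum_iterate_eq_one hProw h0 hrec, hπ, sub_self]
  have hε : 0 ≤ 1 - ε := sub_nonneg.2 (le_one_of_minorization hProw hπ hmin)
  rw [← sum_sub_distrib]
  have : 2 * |∑ j ∈ A, (νt t j - π j)| ≤ 2 * (1 - ε) ^ t :=
    calc 2 * |∑ j ∈ A, (νt t j - π j)| ≤ ∑ j, |νt t j - π j| :=
          two_mul_abs_sum_le_sum_abs hμ A
      _ ≤ (1 - ε) ^ t * ∑ j, |νt 0 j - π j| :=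
          sum_abs_iterate_sub_le_of_minorization hProw hπ hstat hmin h0 hrec t
      _ ≤ (1 - ε) ^ t * 2 := by gcongr; exact sum_abs_sub_le_two hν0 hπ0 h0 hπ
      _ = 2 * (1 - ε) ^ t := mul_comm _ _
  linarith

end Doeblin

section Metropolis

variable {ι : Type*} [Fintype ι] [DecidableEq ι]

structure IsMetropolisHastings (q : ι → ι → ℝ) (L : ι → ℝ) (P : ι → ι → ℝ) : Prop where
  off_diag : ∀ i j, i ≠ j → P i j = q i j * min (q j i * L j / (q i j * L i)) 1
  diag : ∀ i, P i i = 1 - ∑ j ∈ univ.erase i, P i j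

variable {q P : ι → ι → ℝ} {L : ι → ℝ}

namespace IsMetropolisHastings

theorem sum_eq_one (hP : IsMetropolisHastings q L P) (i : ι) : ∑ j, P i j = 1 := by
  rw [← sum_erase_add _ _ (mem_univ i), hP.diag i]
  ring

theorem eq_min (hP : IsMetropolisHastings q L P) (hq : ∀ i j, 0 < q i j) (hL : ∀ i, 0 < L i)
    {i j : ι} (hij : i ≠ j) : P i j = min (q j i * L j / L i) (q i j) := by
  rw [hP.off_diag i j hij, mul_min_of_nonneg _ _ (hq i j).le, mul_one]
  congr 1
  field_simp [(hq i j).ne', (hL i).ne']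

theorem detailedBalance (hP : IsMetropolisHastings q L P) (hq : ∀ i j, 0 < q i j)
    (hL : ∀ i, 0 < L i) (i j : ι) : L i * P i j = L j * P j i := by
  rcases eq_or_ne i j with rfl | hij
  · rfl
  rw [hP.eq_min hq hL hij, hP.eq_min hq hL hij.symm, mul_min_of_nonneg _ _ (hL i).le,
    mul_min_of_nonneg _ _ (hL j).le, min_comm]
  congr 1 <;> field_simp [(hL i).ne', (hL j).ne']

theorem proposal_le_diag (hP : IsMetropolisHastings q L P) (hq : ∀ i j, 0 < q i j)
    (hL : ∀ i, 0 < L i) (hqrow : ∀ i, ∑ j, q i j = 1) (i : ι) : q i i ≤ P i i := by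
  have hoff : ∑ j ∈ univ.erase i, P i j ≤ ∑ j ∈ univ.erase i, q i j :=
    sum_le_sum fun j hj => (hP.eq_min hq hL (ne_of_mem_erase hj).symm).trans_le (min_le_right _ _)
  have hsplit := sum_erase_add _ (q i) (mem_univ i)
  rw [hqrow] at hsplit
  rw [hP.diag]
  linarith

theorem minorization (hP : IsMetropolisHastings q L P) (hq : ∀ i j, 0 < q i j)
    (hL : ∀ i, 0 < L i) (hqrow : ∀ i, ∑ j, q i j = 1) {c M : ℝ} (hc0 : 0 ≤ c)
    (hc : ∀ i j, c ≤ q i j) (hM : ∀ i, L i ≤ M) (i j : ι) : c * L j / M ≤ P i j := by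
  have hLi := hL i
  have hLj := hL j
  have hcM : c * L j / M ≤ c := by
    rw [div_le_iff₀ (hLj.trans_le (hM j))]
    exact mul_le_mul_of_nonneg_left (hM j) hc0
  rcases eq_or_ne i j with rfl | hij
  · exact hcM.trans ((hc i i).trans (hP.proposal_le_diag hq hL hqrow i))
  rw [hP.eq_min hq hL hij]
  refine le_min ?_ (hcM.trans (hc i j))
  calc c * L j / M ≤ c * L j / L i := by gcongr; exact hM i
    _ ≤ q j i * L j / L i := by gcongr; exact hc j i

end IsMetropolisHastings

end Metropolis

section GraphProposal

variable {B : ℕ} {E : Fin B → Fin B → Prop} [DecidableRel E] {D : Fin B → ℕ} {ρ : ℝ}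
  {q : Fin B → Fin B → ℝ}

theorem graphProposal_ge
    (hq : ∀ i j, q i j = ρ / B + (1 - ρ) * (if E i j then (1 : ℝ) else 0) / (D i))
    (hρ1 : ρ ≤ 1) (i j : Fin B) : ρ / B ≤ q i j := by
  rw [hq]
  have : 0 ≤ (1 - ρ) * (if E i j then (1 : ℝ) else 0) / (D i) := by
    split_ifs <;> positivity
  linarith

theorem graphProposal_sum
    (hq : ∀ i j, q i j = ρ / B + (1 - ρ) * (if E i j then (1 : ℝ) else 0) / (D i))
    (hD : ∀ i, D i = (univ.filter (fun j => E i j)).card)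
    (hD1 : ∀ i, 1 ≤ D i) (i : Fin B) : ∑ j, q i j = 1 := by
  have hB : (B : ℝ) ≠ 0 := by exact_mod_cast i.pos.ne'
  have hDi : (D i : ℝ) ≠ 0 := by exact_mod_cast (Nat.one_le_iff_ne_zero.1 (hD1 i))
  simp only [hq, sum_add_distrib, ← sum_div, ← mul_sum, sum_boole, ← hD, sum_const, card_univ,
    Fintype.card_fin, nsmul_eq_mul]
  field_simp
  ring

end GraphProposal

theorem stmt_8_general
    (B : ℕ) (hB : 1 ≤ B)
    (E : Fin B → Fin B → Prop) [DecidableRel E]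
    (D : Fin B → ℕ)
    (hD : ∀ i, D i = (Finset.univ.filter (fun j => E i j)).card)
    (hD1 : ∀ i, 1 ≤ D i)
    (ρ : ℝ) (hρ0 : 0 < ρ) (hρ1 : ρ < 1)
    (q : Fin B → Fin B → ℝ)
    (hq : ∀ i j, q i j = ρ / B + (1 - ρ) * (if E i j then (1 : ℝ) else 0) / (D i))
    (L : Fin B → ℝ) (hL : ∀ i, 0 < L i)
    (P : Fin B → Fin B → ℝ)
    (hPoff : ∀ i j, i ≠ j → P i j = q i j * min (q j i * L j / (q i j * L i)) 1)
    (hPdiag : ∀ i, P i i = 1 - ∑ j ∈ Finset.univ.erase i, P i j)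
    (πd : Fin B → ℝ) (hπd : ∀ j, πd j = L j / ∑ ℓ, L ℓ)
    (ν : Fin B → ℝ) (hνnonneg : ∀ i, 0 ≤ ν i) (hνsum : ∑ i, ν i = 1)
    -- `νt t` is the distribution of the chain at time `t` started from `ν`
    (νt : ℕ → Fin B → ℝ)
    (hν0 : νt 0 = ν)
    (hνrec : ∀ t j, νt (t + 1) j = ∑ i, νt t i * P i j) :
    ∀ (t : ℕ) (A : Finset (Fin B)),
      |∑ j ∈ A, νt t j - ∑ j ∈ A, πd j| ≤
        (1 - ρ * (∑ ℓ, L ℓ) /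
          (B * Finset.univ.sup' ⟨⟨0, hB⟩, Finset.mem_univ _⟩ L)) ^ t := by
  intro t A
  have : Nonempty (Fin B) := ⟨⟨0, hB⟩⟩
  set M := univ.sup' ⟨⟨0, hB⟩, mem_univ _⟩ L
  have hLM : ∀ i, L i ≤ M := fun i => le_sup' L (mem_univ i)
  have hS : 0 < ∑ ℓ, L ℓ := sum_pos (fun i _ => hL i) univ_nonempty
  have hρB : 0 < ρ / B := by positivity
  have hqge := graphProposal_ge hq hρ1.le
  have hq0 : ∀ i j, 0 < q i j := fun i j => hρB.trans_le (hqge i j)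
  have hqrow := graphProposal_sum hq hD hD1
  have hP : IsMetropolisHastings q L P := ⟨hPoff, hPdiag⟩
  have hProw := hP.sum_eq_one
  have hπ0 : ∀ j, 0 ≤ πd j := fun j => by rw [hπd]; exact div_nonneg (hL j).le hS.le
  have hπ : ∑ j, πd j = 1 := by simp only [hπd, ← sum_div, div_self hS.ne']
  have hstat : ∀ j, ∑ i, πd i * P i j = πd j := by
    simp only [hπd, div_mul_eq_mul_div, ← sum_div,
      sum_mul_eq_self_of_detailedBalance hProw (hP.detailedBalance hq0 hL),
      implies_true]
  have hmin : ∀ i j, ρ * (∑ ℓ, L ℓ) / (B * M) * πd j ≤ P i j := fun i j => by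
    have hM : 0 < M := (hL i).trans_le (hLM i)
    calc ρ * (∑ ℓ, L ℓ) / (B * M) * πd j = ρ / B * L j / M := by
          rw [hπd]; field_simp
      _ ≤ P i j := hP.minorization hq0 hL hqrow hρB.le hqge hLM i j
  exact abs_sum_iterate_sub_le_pow_of_minorization hProw hπ0 hπ hstat hmin
    (hν0 ▸ hνnonneg) (hν0 ▸ hνsum) hνrec t A

/-- geometric total-variation convergence of the graph-enabled discretized MCMC:
`‖ν P_d^t − π_d‖_TV ≤ (1 − ρ Σ L/(B·max L))^t` for every initial probability vector `ν`. -/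
theorem stmt_8
    (B : ℕ) (hB : 1 ≤ B)
    (E : Fin B → Fin B → Prop) [DecidableRel E]
    (hEsymm : ∀ i j, E i j → E j i) (hEirr : ∀ i, ¬ E i i)
    (D : Fin B → ℕ)
    (hD : ∀ i, D i = (Finset.univ.filter (fun j => E i j)).card)
    (hD1 : ∀ i, 1 ≤ D i)
    (ρ : ℝ) (hρ0 : 0 < ρ) (hρ1 : ρ < 1)
    (q : Fin B → Fin B → ℝ)
    (hq : ∀ i j, q i j = ρ / B + (1 - ρ) * (if E i j then (1 : ℝ) else 0) / (D i))
    (L : Fin B → ℝ) (hL : ∀ i, 0 < L i)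
    (P : Fin B → Fin B → ℝ)
    (hPoff : ∀ i j, i ≠ j → P i j = q i j * min (q j i * L j / (q i j * L i)) 1)
    (hPdiag : ∀ i, P i i = 1 - ∑ j ∈ Finset.univ.erase i, P i j)
    (πd : Fin B → ℝ) (hπd : ∀ j, πd j = L j / ∑ ℓ, L ℓ)
    (ν : Fin B → ℝ) (hνnonneg : ∀ i, 0 ≤ ν i) (hνsum : ∑ i, ν i = 1)
    -- `νt t` is the distribution of the chain at time `t` started from `ν`
    (νt : ℕ → Fin B → ℝ)
    (hν0 : νt 0 = ν)
    (hνrec : ∀ t j, νt (t + 1) j = ∑ i, νt t i * P i j) :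
    ∀ (t : ℕ) (A : Finset (Fin B)),
      |∑ j ∈ A, νt t j - ∑ j ∈ A, πd j| ≤
        (1 - ρ * (∑ ℓ, L ℓ) /
          (B * Finset.univ.sup' ⟨⟨0, hB⟩, Finset.mem_univ _⟩ L)) ^ t :=
  stmt_8_general B hB E D hD hD1 ρ hρ0 hρ1 q hq L hL P hPoff hPdiag πd hπd ν hνnonneg hνsum νt hν0
    hνrec
end

section
/- For all i, j ∈ {1,…,B}, all θ ∈ ℝ^d, and all Borel sets A ⊆ ℝ^d: P_c((i,θ), {j} × A) ≥ (ρ/(B h^d)) ∫_A K((θ′ − θ_j)/h)·min{ L(θ′)/L(θ), 1 } dθ′. Consequently, the Doeblin minorization P_c((i,θ), {j} × A) ≥ ( ρ ∫_{ℝ^d} π̂_KDE(γ)L(γ) dγ / sup_{γ ∈ ℝ^d} L(γ) ) · μ({j} × A) holds. -/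
open MeasureTheory Finset
open scoped Classical

/-- Doeblin minorization for the graph-enabled MCMC kernel `P_c`:
`P_c((i,θ), {j}×A) ≥ (ρ/(B h^d)) ∫_A K((θ′−θ_j)/h) min{L(θ′)/L(θ),1} dθ′` and
`P_c((i,θ), {j}×A) ≥ (ρ ∫ π̂_KDE L / sup L) · μ({j}×A)`. -/
theorem stmt_10
    (d B : ℕ) (hd : 1 ≤ d) (hB : 1 ≤ B)
    (θp : Fin B → EuclideanSpace ℝ (Fin d))
    (K : EuclideanSpace ℝ (Fin d) → ℝ)
    (hKmeas : Measurable K) (hKnonneg : ∀ u, 0 ≤ K u) (hKint : ∫ u, K u = 1)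
    (h : ℝ) (hh : 0 < h)
    (E : Fin B → Fin B → Prop) [DecidableRel E]
    (hEsymm : ∀ i j, E i j → E j i) (hEirr : ∀ i, ¬ E i i)
    (D : Fin B → ℕ)
    (hD : ∀ i, D i = (Finset.univ.filter (fun j => E i j)).card)
    (hD1 : ∀ i, 1 ≤ D i)
    (ρ : ℝ) (hρ0 : 0 < ρ) (hρ1 : ρ < 1)
    (q : Fin B → Fin B → ℝ)
    (hq : ∀ i j, q i j = ρ / B + (1 - ρ) * (if E i j then (1 : ℝ) else 0) / (D i))
    (L : EuclideanSpace ℝ (Fin d) → ℝ)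
    (hLpos : ∀ x, 0 < L x) (hLmeas : Measurable L) (hLbdd : BddAbove (Set.range L))
    (πK : EuclideanSpace ℝ (Fin d) → ℝ)
    (hπK : ∀ x, πK x = (1 / (B * h ^ d)) * ∑ i, K (h⁻¹ • (x - θp i)))
    (hpos : 0 < ∫ x, πK x * L x)
    (r : Fin B → EuclideanSpace ℝ (Fin d) → ℝ)
    (hr : ∀ i x, r i x = 1 - ∑ ℓ, ∫ y,
      q i ℓ * (h ^ d)⁻¹ * K (h⁻¹ • (y - θp ℓ)) * min (q ℓ i * L y / (q i ℓ * L x)) 1)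
    -- `Pc i x j A` is the kernel value `P_c((i,x), {j} × A)`
    (Pc : Fin B → EuclideanSpace ℝ (Fin d) → Fin B → Set (EuclideanSpace ℝ (Fin d)) → ℝ)
    (hPc : ∀ i x j A, MeasurableSet A → Pc i x j A =
      (∫ y in A,
        q i j * (h ^ d)⁻¹ * K (h⁻¹ • (y - θp j)) * min (q j i * L y / (q i j * L x)) 1)
      + (if j = i ∧ x ∈ A then r i x else 0)) :
    (∀ i x j (A : Set (EuclideanSpace ℝ (Fin d))), MeasurableSet A →
      ρ / (B * h ^ d) * ∫ y in A, K (h⁻¹ • (y - θp j)) * min (L y / L x) 1 ≤ Pc i x j A) ∧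
    (∀ i x j (A : Set (EuclideanSpace ℝ (Fin d))), MeasurableSet A →
      ρ * (∫ y, πK y * L y) / (⨆ y, L y) *
        ((∫ y in A, K (h⁻¹ • (y - θp j)) * L y) /
          ∑ ℓ, ∫ y, K (h⁻¹ • (y - θp ℓ)) * L y) ≤ Pc i x j A) := by
  have hhd : (0:ℝ) < h ^ d := pow_pos hh d
  have hB0 : (0:ℝ) < B := by exact_mod_cast hB
  have hBhd : (0:ℝ) < B * h ^ d := mul_pos hB0 hhd
  -- K is integrable
  have hKi : Integrable K := by
    by_contra hc
    rw [integral_undef hc] at hKint; norm_num at hKint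
  have hKcm : ∀ c : EuclideanSpace ℝ (Fin d), Measurable fun y => K (h⁻¹ • (y - c)) :=
    fun c => hKmeas.comp ((measurable_id.sub_const c).const_smul h⁻¹)
  have hKci : ∀ c : EuclideanSpace ℝ (Fin d), Integrable fun y => K (h⁻¹ • (y - c)) := by
    intro c
    have h1 : Integrable fun y : EuclideanSpace ℝ (Fin d) => K (h⁻¹ • y) :=
      hKi.comp_smul (inv_ne_zero hh.ne')
    exact h1.comp_sub_right c
  have hKcint : ∀ c : EuclideanSpace ℝ (Fin d), ∫ y, K (h⁻¹ • (y - c)) = h ^ d := by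
    intro c
    have t1 : ∫ y, K (h⁻¹ • (y - c)) = ∫ y, K (h⁻¹ • y) :=
      integral_sub_right_eq_self (fun y => K (h⁻¹ • y)) c
    rw [t1, MeasureTheory.Measure.integral_comp_smul volume K h⁻¹, hKint,
      finrank_euclideanSpace_fin, inv_pow, inv_inv, smul_eq_mul, mul_one, abs_of_pos hhd]
  -- properties of q
  have hqlb : ∀ i j, ρ / B ≤ q i j := by
    intro i j
    rw [hq i j]
    have hDi : (0:ℝ) < D i := by exact_mod_cast hD1 i
    have h1 : (0:ℝ) ≤ 1 - ρ := by linarith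
    have h2 : (0:ℝ) ≤ (if E i j then (1:ℝ) else 0) := by split_ifs <;> norm_num
    have : 0 ≤ (1 - ρ) * (if E i j then (1:ℝ) else 0) / D i :=
      div_nonneg (mul_nonneg h1 h2) (Nat.cast_nonneg _)
    linarith
  have hqpos : ∀ i j, 0 < q i j := fun i j => lt_of_lt_of_le (div_pos hρ0 hB0) (hqlb i j)
  have hqsum : ∀ i, ∑ ℓ, q i ℓ = 1 := by
    intro i
    have hDi : (0:ℝ) < D i := by exact_mod_cast hD1 i
    simp only [hq]
    rw [Finset.sum_add_distrib, Finset.sum_const, card_univ, Fintype.card_fin,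
      ← Finset.sum_div, ← Finset.mul_sum, Finset.sum_boole, nsmul_eq_mul]
    have hcard : ((Finset.univ.filter (fun j => E i j)).card : ℝ) = (D i : ℝ) := by
      exact_mod_cast (hD i).symm
    rw [hcard, mul_div_assoc, div_self hDi.ne', mul_one, mul_div_cancel₀ _ hB0.ne']
    ring
  -- key pointwise inequality on the acceptance ratios
  have key : ∀ (i j : Fin B) (x y : EuclideanSpace ℝ (Fin d)),
      ρ / B * min (L y / L x) 1 ≤ q i j * min (q j i * L y / (q i j * L x)) 1 := by
    intro i j x y
    have hx := hLpos x; have hy := hLpos y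
    have hij := hqpos i j; have hji := hqpos j i
    rw [mul_min_of_nonneg _ _ hij.le, mul_min_of_nonneg _ _ (div_pos hρ0 hB0).le,
      mul_one, mul_one]
    have e1 : q i j * (q j i * L y / (q i j * L x)) = q j i * (L y / L x) := by
      field_simp
    rw [e1]
    refine le_min (le_trans (min_le_left _ _) ?_) (le_trans (min_le_right _ _) (hqlb i j))
    exact mul_le_mul_of_nonneg_right (hqlb j i) (by positivity)
  -- integrability of the various integrands
  have hmin_meas : ∀ (c c' : ℝ) (x : EuclideanSpace ℝ (Fin d)),
      Measurable fun y => min (c * L y / (c' * L x)) 1 :=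
    fun c c' x => ((hLmeas.const_mul c).div_const _).min measurable_const
  have hfint : ∀ (i j : Fin B) (x : EuclideanSpace ℝ (Fin d)),
      Integrable fun y => q i j * (h ^ d)⁻¹ * K (h⁻¹ • (y - θp j)) *
        min (q j i * L y / (q i j * L x)) 1 := by
    intro i j x
    refine Integrable.mono' (((hKci (θp j)).const_mul (q i j * (h ^ d)⁻¹)))
      ((((hKcm (θp j)).const_mul _).mul (hmin_meas _ _ x)).aestronglyMeasurable) ?_
    filter_upwards with y
    have hx := hLpos x; have hy := hLpos y
    have hij := hqpos i j; have hji := hqpos j i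
    have h1 : 0 ≤ min (q j i * L y / (q i j * L x)) 1 :=
      le_min (by positivity) one_pos.le
    have h2 : min (q j i * L y / (q i j * L x)) 1 ≤ 1 := min_le_right _ _
    have h3 : 0 ≤ q i j * (h ^ d)⁻¹ * K (h⁻¹ • (y - θp j)) := by
      have := hKnonneg (h⁻¹ • (y - θp j)); positivity
    rw [Real.norm_eq_abs, abs_of_nonneg (by positivity)]
    calc q i j * (h ^ d)⁻¹ * K (h⁻¹ • (y - θp j)) * min (q j i * L y / (q i j * L x)) 1
        ≤ q i j * (h ^ d)⁻¹ * K (h⁻¹ • (y - θp j)) * 1 := by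
          exact mul_le_mul_of_nonneg_left h2 h3
      _ = q i j * (h ^ d)⁻¹ * K (h⁻¹ • (y - θp j)) := mul_one _
  have hgint : ∀ (j : Fin B) (x : EuclideanSpace ℝ (Fin d)),
      Integrable fun y => K (h⁻¹ • (y - θp j)) * min (L y / L x) 1 := by
    intro j x
    refine Integrable.mono' (hKci (θp j))
      ((hKcm (θp j)).mul ((hLmeas.div_const _).min measurable_const)).aestronglyMeasurable ?_
    filter_upwards with y
    have hx := hLpos x; have hy := hLpos y
    have h1 : 0 ≤ min (L y / L x) 1 := le_min (by positivity) one_pos.le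
    have h2 : min (L y / L x) 1 ≤ 1 := min_le_right _ _
    rw [Real.norm_eq_abs, abs_of_nonneg (by have := hKnonneg (h⁻¹ • (y - θp j)); positivity)]
    calc K (h⁻¹ • (y - θp j)) * min (L y / L x) 1 ≤ K (h⁻¹ • (y - θp j)) * 1 :=
          mul_le_mul_of_nonneg_left h2 (hKnonneg _)
      _ = K (h⁻¹ • (y - θp j)) := mul_one _
  -- nonnegativity of r
  have hr0 : ∀ (i : Fin B) (x : EuclideanSpace ℝ (Fin d)), 0 ≤ r i x := by
    intro i x
    rw [hr i x, sub_nonneg]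
    calc ∑ ℓ, ∫ y, q i ℓ * (h ^ d)⁻¹ * K (h⁻¹ • (y - θp ℓ)) *
            min (q ℓ i * L y / (q i ℓ * L x)) 1
        ≤ ∑ ℓ, q i ℓ := by
          refine Finset.sum_le_sum (fun ℓ _ => ?_)
          have h1 : ∫ y, q i ℓ * (h ^ d)⁻¹ * K (h⁻¹ • (y - θp ℓ)) *
              min (q ℓ i * L y / (q i ℓ * L x)) 1
              ≤ ∫ y, q i ℓ * (h ^ d)⁻¹ * K (h⁻¹ • (y - θp ℓ)) := by
            refine integral_mono (hfint i ℓ x) ((hKci (θp ℓ)).const_mul _) (fun y => ?_)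
            have h3 : 0 ≤ q i ℓ * (h ^ d)⁻¹ * K (h⁻¹ • (y - θp ℓ)) := by
              have := hKnonneg (h⁻¹ • (y - θp ℓ)); have := hqpos i ℓ; positivity
            calc q i ℓ * (h ^ d)⁻¹ * K (h⁻¹ • (y - θp ℓ)) *
                min (q ℓ i * L y / (q i ℓ * L x)) 1
                ≤ q i ℓ * (h ^ d)⁻¹ * K (h⁻¹ • (y - θp ℓ)) * 1 :=
                  mul_le_mul_of_nonneg_left (min_le_right _ _) h3
              _ = q i ℓ * (h ^ d)⁻¹ * K (h⁻¹ • (y - θp ℓ)) := mul_one _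
          have h2 : ∫ y, q i ℓ * (h ^ d)⁻¹ * K (h⁻¹ • (y - θp ℓ)) = q i ℓ := by
            rw [MeasureTheory.integral_const_mul, hKcint (θp ℓ)]
            field_simp
          linarith
      _ = 1 := hqsum i
  -- Part 1
  have part1 : ∀ i x j (A : Set (EuclideanSpace ℝ (Fin d))), MeasurableSet A →
      ρ / (B * h ^ d) * ∫ y in A, K (h⁻¹ • (y - θp j)) * min (L y / L x) 1 ≤ Pc i x j A := by
    intro i x j A hA
    rw [hPc i x j A hA]
    have hge : ρ / (B * h ^ d) * ∫ y in A, K (h⁻¹ • (y - θp j)) * min (L y / L x) 1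
        ≤ ∫ y in A, q i j * (h ^ d)⁻¹ * K (h⁻¹ • (y - θp j)) *
          min (q j i * L y / (q i j * L x)) 1 := by
      rw [← MeasureTheory.integral_const_mul]
      refine setIntegral_mono_on
        (((hgint j x).const_mul (ρ / (B * h ^ d))).integrableOn)
        ((hfint i j x).integrableOn) hA (fun y _ => ?_)
      have e1 : ρ / (B * h ^ d) * (K (h⁻¹ • (y - θp j)) * min (L y / L x) 1)
          = (h ^ d)⁻¹ * K (h⁻¹ • (y - θp j)) * (ρ / B * min (L y / L x) 1) := by
        field_simp
      have e2 : q i j * (h ^ d)⁻¹ * K (h⁻¹ • (y - θp j)) *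
          min (q j i * L y / (q i j * L x)) 1
          = (h ^ d)⁻¹ * K (h⁻¹ • (y - θp j)) *
            (q i j * min (q j i * L y / (q i j * L x)) 1) := by ring
      rw [e1, e2]
      exact mul_le_mul_of_nonneg_left (key i j x y)
        (by have := hKnonneg (h⁻¹ • (y - θp j)); positivity)
    have hpos' : (0:ℝ) ≤ if j = i ∧ x ∈ A then r i x else 0 := by
      split_ifs with hc
      · exact hr0 i x
      · exact le_refl 0
    linarith
  refine ⟨part1, ?_⟩
  -- Part 2
  intro i x j A hA
  set S := ⨆ y, L y with hS
  have hLleS : ∀ y, L y ≤ S := fun y => le_ciSup hLbdd y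
  have hSpos : 0 < S := lt_of_lt_of_le (hLpos 0) (hLleS 0)
  -- integrability of K-comp * L
  have hKLi : ∀ c : EuclideanSpace ℝ (Fin d), Integrable fun y => K (h⁻¹ • (y - c)) * L y := by
    intro c
    refine Integrable.mono' ((hKci c).const_mul S)
      ((hKcm c).mul hLmeas).aestronglyMeasurable ?_
    filter_upwards with y
    rw [Real.norm_eq_abs,
      abs_of_nonneg (mul_nonneg (hKnonneg _) (hLpos y).le)]
    calc K (h⁻¹ • (y - c)) * L y ≤ K (h⁻¹ • (y - c)) * S :=
          mul_le_mul_of_nonneg_left (hLleS y) (hKnonneg _)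
      _ = S * K (h⁻¹ • (y - c)) := mul_comm _ _
  -- the normalizing constant
  have hI : ∫ y, πK y * L y
      = 1 / (B * h ^ d) * ∑ ℓ, ∫ y, K (h⁻¹ • (y - θp ℓ)) * L y := by
    calc ∫ y, πK y * L y
        = ∫ y, 1 / (B * h ^ d) * ∑ ℓ, (K (h⁻¹ • (y - θp ℓ)) * L y) := by
          congr 1; funext y; rw [hπK y, mul_assoc, Finset.sum_mul]
      _ = 1 / (B * h ^ d) * ∫ y, ∑ ℓ, (K (h⁻¹ • (y - θp ℓ)) * L y) :=
          MeasureTheory.integral_const_mul _ _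
      _ = 1 / (B * h ^ d) * ∑ ℓ, ∫ y, K (h⁻¹ • (y - θp ℓ)) * L y := by
          rw [integral_finset_sum _ (fun ℓ _ => hKLi (θp ℓ))]
  set Sg := ∑ ℓ, ∫ y, K (h⁻¹ • (y - θp ℓ)) * L y with hSg
  have hSeq : Sg = (B * h ^ d) * ∫ y, πK y * L y := by
    rw [hI]; field_simp
  have hSpos2 : 0 < Sg := by rw [hSeq]; positivity
  -- the comparison between the two lower bounds
  have hcomp : (∫ y in A, K (h⁻¹ • (y - θp j)) * L y) / S
      ≤ ∫ y in A, K (h⁻¹ • (y - θp j)) * min (L y / L x) 1 := by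
    rw [div_le_iff₀ hSpos, ← MeasureTheory.integral_mul_const]
    refine setIntegral_mono_on ((hKLi (θp j)).integrableOn)
      (((hgint j x).mul_const S).integrableOn) hA (fun y _ => ?_)
    have hy := hLpos y; have hx := hLpos x
    have hmin : L y / S ≤ min (L y / L x) 1 := by
      refine le_min ?_ (by rw [div_le_one hSpos]; exact hLleS y)
      exact div_le_div_of_nonneg_left hy.le hx (hLleS x)
    calc K (h⁻¹ • (y - θp j)) * L y
        = K (h⁻¹ • (y - θp j)) * (L y / S) * S := by field_simp
      _ ≤ K (h⁻¹ • (y - θp j)) * min (L y / L x) 1 * S := by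
          refine mul_le_mul_of_nonneg_right ?_ hSpos.le
          exact mul_le_mul_of_nonneg_left hmin (hKnonneg _)
  have hfinal : ρ * (∫ y, πK y * L y) / S *
      ((∫ y in A, K (h⁻¹ • (y - θp j)) * L y) / Sg)
      = ρ / (B * h ^ d) * ((∫ y in A, K (h⁻¹ • (y - θp j)) * L y) / S) := by
    rw [hSeq]
    have hI0 : (∫ y, πK y * L y) ≠ 0 := hpos.ne'
    field_simp
  calc ρ * (∫ y, πK y * L y) / S *
      ((∫ y in A, K (h⁻¹ • (y - θp j)) * L y) / Sg)
      = ρ / (B * h ^ d) * ((∫ y in A, K (h⁻¹ • (y - θp j)) * L y) / S) := hfinal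
    _ ≤ ρ / (B * h ^ d) * ∫ y in A, K (h⁻¹ • (y - θp j)) * min (L y / L x) 1 :=
        mul_le_mul_of_nonneg_left hcomp (by positivity)
    _ ≤ Pc i x j A := part1 i x j A hA
end
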